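/- arXiv:cs/0606116 — 7 statements merged into one kernel-verified Lean document; each statement's English description precedes it below -/
import Mathlib

section
/- Any simple (cycle-free) directed path in a Thompson NFA contains at most one back transition. -/
inductive Regex (α : Type) where
  | char : α → Regex α
  | cat  : Regex α → Regex α → Regex α
  | alt  : Regex α → Regex α → Regex α
  | star : Regex α → Regex α

namespace Regex
variable {α : Type}
/-- number of characters and operators in `R` (nodes of the parse tree). -/
def size : Regex α → ℕ
  | char _ => 1
  | cat S T => S.size + T.size + 1
  | alt S T => S.size + T.size + 1
  | star S => S.size + 1

/-- the language generated by `R`. -/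
def lang : Regex α → Set (List α)
  | char a => {[a]}
  | cat S T => {w | ∃ u v, u ∈ S.lang ∧ v ∈ T.lang ∧ w = u ++ v}
  | alt S T => S.lang ∪ T.lang
  | star S => {w | ∃ l : List (List α), (∀ u ∈ l, u ∈ S.lang) ∧ w = l.flatten}
end Regex

/-- An NFA with ε-transitions (`none` labels), a single start and accepting state,
and a distinguished set of back transitions. -/
structure TNFA (α : Type) where
  states : Finset ℕ
  start : ℕ
  accept : ℕ
  trans : Finset (ℕ × Option α × ℕ)
  back : Finset (ℕ × ℕ)

variable {α : Type} [DecidableEq α]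

/-- Thompson's construction, allocating the states `[b, b + 2·size R)`;
the start state is `b` and the accepting state is `b+1`. -/
def thompson : Regex α → ℕ → TNFA α
  | .char a, b => ⟨{b, b+1}, b, b+1, {(b, some a, b+1)}, ∅⟩
  | .cat S T, b =>
    let A := thompson S (b+2)
    let B := thompson T (b+2+2*S.size)
    ⟨insert b (insert (b+1) (A.states ∪ B.states)), b, b+1,
      ({(b, none, A.start), (A.accept, none, B.start), (B.accept, none, b+1)} :
        Finset (ℕ × Option α × ℕ)) ∪ A.trans ∪ B.trans,
      A.back ∪ B.back⟩
  | .alt S T, b =>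
    let A := thompson S (b+2)
    let B := thompson T (b+2+2*S.size)
    ⟨insert b (insert (b+1) (A.states ∪ B.states)), b, b+1,
      ({(b, none, A.start), (b, none, B.start), (A.accept, none, b+1), (B.accept, none, b+1)} :
        Finset (ℕ × Option α × ℕ)) ∪ A.trans ∪ B.trans,
      A.back ∪ B.back⟩
  | .star S, b =>
    let A := thompson S (b+2)
    ⟨insert b (insert (b+1) A.states), b, b+1,
      ({(b, none, A.start), (b, none, b+1), (A.accept, none, b+1), (A.accept, none, A.start)} :
        Finset (ℕ × Option α × ℕ)) ∪ A.trans,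
      insert (A.accept, A.start) A.back⟩

/-- `Path N s w t`: there is a path from `s` to `t` whose non-ε labels spell `w`. -/
inductive TNFA.Path (N : TNFA α) : ℕ → List α → ℕ → Prop where
  | refl (s : ℕ) : TNFA.Path N s [] s
  | eps {s t u : ℕ} {w : List α} :
      (s, none, t) ∈ N.trans → TNFA.Path N t w u → TNFA.Path N s w u
  | sym {s t u : ℕ} {w : List α} {a : α} :
      (s, some a, t) ∈ N.trans → TNFA.Path N t w u → TNFA.Path N s (a :: w) u

/-- states reachable from `S` via a single `a`-transition. -/
def TNFA.Move (N : TNFA α) (S : Set ℕ) (a : α) : Set ℕ :=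
  {t | ∃ s ∈ S, (s, some a, t) ∈ N.trans}

def TNFA.epsStep (N : TNFA α) (s t : ℕ) : Prop := (s, none, t) ∈ N.trans

/-- the ε-closure of `S`. -/
def TNFA.Close (N : TNFA α) (S : Set ℕ) : Set ℕ :=
  {t | ∃ s ∈ S, Relation.ReflTransGen N.epsStep s t}

section Aux
variable {α : Type} [DecidableEq α]

lemma Regex.one_le_size (R : Regex α) : 1 ≤ R.size := by
  cases R <;> simp [Regex.size]

lemma thompson_start (R : Regex α) (b : ℕ) : (thompson R b).start = b := by
  cases R <;> rfl

lemma thompson_accept (R : Regex α) (b : ℕ) : (thompson R b).accept = b + 1 := by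
  cases R <;> rfl

lemma thompson_trans_range (R : Regex α) : ∀ (b : ℕ) {s : ℕ} {c : Option α} {t : ℕ},
    (s, c, t) ∈ (thompson R b).trans →
    b ≤ s ∧ s < b + 2 * R.size ∧ b ≤ t ∧ t < b + 2 * R.size := by
  induction R with
  | char a =>
    intro b s c t h
    simp only [thompson, Finset.mem_singleton, Prod.mk.injEq] at h
    simp [Regex.size]
    omega
  | cat S T ihS ihT =>
    intro b s c t h
    have h1 := S.one_le_size; have h2 := T.one_le_size
    simp only [thompson, Finset.mem_union, Finset.mem_insert, Finset.mem_singleton,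
      thompson_start, thompson_accept, Prod.mk.injEq] at h
    rcases h with ((⟨h, _, h'⟩ | ⟨h, _, h'⟩ | ⟨h, _, h'⟩) | hA) | hB
    · simp [Regex.size]; omega
    · simp [Regex.size]; omega
    · simp [Regex.size]; omega
    · have := ihS (b+2) hA; simp [Regex.size]; omega
    · have := ihT (b+2+2*S.size) hB; simp [Regex.size]; omega
  | alt S T ihS ihT =>
    intro b s c t h
    have h1 := S.one_le_size; have h2 := T.one_le_size
    simp only [thompson, Finset.mem_union, Finset.mem_insert, Finset.mem_singleton,
      thompson_start, thompson_accept, Prod.mk.injEq] at h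
    rcases h with ((⟨h, _, h'⟩ | ⟨h, _, h'⟩ | ⟨h, _, h'⟩ | ⟨h, _, h'⟩) | hA) | hB
    · simp [Regex.size]; omega
    · simp [Regex.size]; omega
    · simp [Regex.size]; omega
    · simp [Regex.size]; omega
    · have := ihS (b+2) hA; simp [Regex.size]; omega
    · have := ihT (b+2+2*S.size) hB; simp [Regex.size]; omega
  | star S ihS =>
    intro b s c t h
    have h1 := S.one_le_size
    simp only [thompson, Finset.mem_union, Finset.mem_insert, Finset.mem_singleton,
      thompson_start, thompson_accept, Prod.mk.injEq] at h
    rcases h with (⟨h, _, h'⟩ | ⟨h, _, h'⟩ | ⟨h, _, h'⟩ | ⟨h, _, h'⟩) | hA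
    · simp [Regex.size]; omega
    · simp [Regex.size]; omega
    · simp [Regex.size]; omega
    · simp [Regex.size]; omega
    · have := ihS (b+2) hA; simp [Regex.size]; omega

end Aux

section Aux2
variable {α : Type} [DecidableEq α]

lemma thompson_back_struct (R : Regex α) : ∀ (b : ℕ) {x y : ℕ},
    (x, y) ∈ (thompson R b).back →
    x = y + 1 ∧ y % 2 = b % 2 ∧ b + 2 ≤ y ∧ ∃ m, y + 1 < m ∧ m ≤ b + 2 * R.size ∧
      (∀ s (c : Option α) t, (s, c, t) ∈ (thompson R b).trans → y ≤ s → s < m →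
        (y ≤ t ∧ t < m) ∨ s = y + 1) ∧
      (∀ s (c : Option α) t, (s, c, t) ∈ (thompson R b).trans → y ≤ t → t < m →
        (y ≤ s ∧ s < m) ∨ t = y) := by
  induction R with
  | char a => intro b x y h; simp [thompson] at h
  | cat S T ihS ihT =>
    intro b x y h
    have h1 := S.one_le_size; have h2 := T.one_le_size
    have hsz : (Regex.cat S T).size = S.size + T.size + 1 := rfl
    simp only [thompson, Finset.mem_union] at h
    rcases h with hA | hB
    · obtain ⟨e1, e2, e3, m, e4, e5, E1, E2⟩ := ihS (b+2) hA
      refine ⟨e1, by omega, by omega, m, e4, by omega, ?_, ?_⟩ <;>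
      · intro s c t ht hs1 hs2
        simp only [thompson, Finset.mem_union, Finset.mem_insert, Finset.mem_singleton,
          thompson_start, thompson_accept, Prod.mk.injEq] at ht
        rcases ht with ((⟨g, _, g'⟩ | ⟨g, _, g'⟩ | ⟨g, _, g'⟩) | hA') | hB'
        · omega
        · omega
        · omega
        · first
          | exact E1 s c t hA' hs1 hs2
          | exact E2 s c t hA' hs1 hs2
        · have := thompson_trans_range T (b+2+2*S.size) hB'; omega
    · obtain ⟨e1, e2, e3, m, e4, e5, E1, E2⟩ := ihT (b+2+2*S.size) hB
      refine ⟨e1, by omega, by omega, m, e4, by omega, ?_, ?_⟩ <;>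
      · intro s c t ht hs1 hs2
        simp only [thompson, Finset.mem_union, Finset.mem_insert, Finset.mem_singleton,
          thompson_start, thompson_accept, Prod.mk.injEq] at ht
        rcases ht with ((⟨g, _, g'⟩ | ⟨g, _, g'⟩ | ⟨g, _, g'⟩) | hA') | hB'
        · omega
        · omega
        · omega
        · have := thompson_trans_range S (b+2) hA'; omega
        · first
          | exact E1 s c t hB' hs1 hs2
          | exact E2 s c t hB' hs1 hs2
  | alt S T ihS ihT =>
    intro b x y h
    have h1 := S.one_le_size; have h2 := T.one_le_size
    have hsz : (Regex.alt S T).size = S.size + T.size + 1 := rfl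
    simp only [thompson, Finset.mem_union] at h
    rcases h with hA | hB
    · obtain ⟨e1, e2, e3, m, e4, e5, E1, E2⟩ := ihS (b+2) hA
      refine ⟨e1, by omega, by omega, m, e4, by omega, ?_, ?_⟩ <;>
      · intro s c t ht hs1 hs2
        simp only [thompson, Finset.mem_union, Finset.mem_insert, Finset.mem_singleton,
          thompson_start, thompson_accept, Prod.mk.injEq] at ht
        rcases ht with ((⟨g, _, g'⟩ | ⟨g, _, g'⟩ | ⟨g, _, g'⟩ | ⟨g, _, g'⟩) | hA') | hB'
        · omega
        · omega
        · omega
        · omega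
        · first
          | exact E1 s c t hA' hs1 hs2
          | exact E2 s c t hA' hs1 hs2
        · have := thompson_trans_range T (b+2+2*S.size) hB'; omega
    · obtain ⟨e1, e2, e3, m, e4, e5, E1, E2⟩ := ihT (b+2+2*S.size) hB
      refine ⟨e1, by omega, by omega, m, e4, by omega, ?_, ?_⟩ <;>
      · intro s c t ht hs1 hs2
        simp only [thompson, Finset.mem_union, Finset.mem_insert, Finset.mem_singleton,
          thompson_start, thompson_accept, Prod.mk.injEq] at ht
        rcases ht with ((⟨g, _, g'⟩ | ⟨g, _, g'⟩ | ⟨g, _, g'⟩ | ⟨g, _, g'⟩) | hA') | hB'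
        · omega
        · omega
        · omega
        · omega
        · have := thompson_trans_range S (b+2) hA'; omega
        · first
          | exact E1 s c t hB' hs1 hs2
          | exact E2 s c t hB' hs1 hs2
  | star S ihS =>
    intro b x y h
    have h1 := S.one_le_size
    have hsz : (Regex.star S).size = S.size + 1 := rfl
    simp only [thompson, Finset.mem_insert, thompson_start, thompson_accept,
      Prod.mk.injEq] at h
    rcases h with ⟨hx, hy⟩ | hA
    · subst hx; subst hy
      refine ⟨rfl, by omega, by omega, b + 2 + 2 * S.size, by omega, by omega, ?_, ?_⟩
      · intro s c t ht hs1 hs2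
        simp only [thompson, Finset.mem_union, Finset.mem_insert, Finset.mem_singleton,
          thompson_start, thompson_accept, Prod.mk.injEq] at ht
        rcases ht with (⟨g, _, g'⟩ | ⟨g, _, g'⟩ | ⟨g, _, g'⟩ | ⟨g, _, g'⟩) | hA'
        · omega
        · omega
        · omega
        · omega
        · have := thompson_trans_range S (b+2) hA'; omega
      · intro s c t ht hs1 hs2
        simp only [thompson, Finset.mem_union, Finset.mem_insert, Finset.mem_singleton,
          thompson_start, thompson_accept, Prod.mk.injEq] at ht
        rcases ht with (⟨g, _, g'⟩ | ⟨g, _, g'⟩ | ⟨g, _, g'⟩ | ⟨g, _, g'⟩) | hA'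
        · omega
        · omega
        · omega
        · omega
        · have := thompson_trans_range S (b+2) hA'; omega
    · obtain ⟨e1, e2, e3, m, e4, e5, E1, E2⟩ := ihS (b+2) hA
      refine ⟨e1, by omega, by omega, m, e4, by omega, ?_, ?_⟩ <;>
      · intro s c t ht hs1 hs2
        simp only [thompson, Finset.mem_union, Finset.mem_insert, Finset.mem_singleton,
          thompson_start, thompson_accept, Prod.mk.injEq] at ht
        rcases ht with (⟨g, _, g'⟩ | ⟨g, _, g'⟩ | ⟨g, _, g'⟩ | ⟨g, _, g'⟩) | hA'
        · omega
        · omega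
        · omega
        · omega
        · first
          | exact E1 s c t hA' hs1 hs2
          | exact E2 s c t hA' hs1 hs2

end Aux2

section Aux3

lemma nat_ivt_up (P : ℕ → Prop) [DecidablePred P] : ∀ {a b : ℕ}, a ≤ b → ¬ P a → P b →
    ∃ k, a ≤ k ∧ k < b ∧ ¬ P k ∧ P (k + 1) := by
  intro a b
  induction b with
  | zero => intro hab ha hb; interval_cases a; exact absurd hb ha
  | succ n ih =>
    intro hab ha hb
    rcases Nat.lt_or_ge a (n+1) with h | h
    · by_cases hn : P n
      · obtain ⟨k, hk1, hk2, hk3, hk4⟩ := ih (by omega) ha hn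
        exact ⟨k, hk1, by omega, hk3, hk4⟩
      · exact ⟨n, by omega, by omega, hn, hb⟩
    · have : a = n + 1 := by omega
      subst this; exact absurd hb ha

lemma nat_ivt_down (P : ℕ → Prop) [DecidablePred P] {a b : ℕ} (hab : a ≤ b) (ha : P a)
    (hb : ¬ P b) : ∃ k, a ≤ k ∧ k < b ∧ P k ∧ ¬ P (k + 1) := by
  obtain ⟨k, h1, h2, h3, h4⟩ := nat_ivt_up (fun n => ¬ P n) hab (not_not_intro ha) hb
  exact ⟨k, h1, h2, not_not.mp h3, h4⟩

lemma exists_two_of_countP {β : Type*} : ∀ {l : List β} {P : β → Bool}, 2 ≤ l.countP P →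
    ∃ i j, ∃ (hj : j < l.length) (hij : i < j), P (l[i]'(hij.trans hj)) ∧ P l[j] := by
  intro l
  induction l with
  | nil => intro P h; simp at h
  | cons a t ih =>
    intro P h
    by_cases ha : P a
    · have h1 : 1 ≤ t.countP P := by
        rw [List.countP_cons, if_pos ha] at h; omega
      have : ∃ x ∈ t, P x := by
        rw [← List.countP_pos_iff]; omega
      obtain ⟨x, hx, hPx⟩ := this
      obtain ⟨j, hj, rfl⟩ := List.mem_iff_getElem.mp hx
      exact ⟨0, j + 1, by simpa using Nat.succ_lt_succ hj, Nat.succ_pos j, by simpa using ha,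
        by simpa using hPx⟩
    · rw [List.countP_cons, if_neg ha, Nat.add_zero] at h
      obtain ⟨i, j, hj, hij, hi', hj'⟩ := ih h
      exact ⟨i + 1, j + 1, by simpa using Nat.succ_lt_succ hj, by omega,
        by simpa using hi', by simpa using hj'⟩

end Aux3

/-- any cycle-free directed path in a Thompson NFA (given as its list
of transitions, consecutive ones chained, visiting no state twice) contains at most
one back transition. -/
theorem thompson_cycle_free_path_one_back (R : Regex α) (b : ℕ)
    (p : List (ℕ × Option α × ℕ))
    (hmem : ∀ e ∈ p, e ∈ (thompson R b).trans)
    (hchain : List.Chain' (fun e f : ℕ × Option α × ℕ => e.2.2 = f.1) p)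
    (hnodup : (p.map Prod.fst ++ (p.getLast?.map (fun e => e.2.2)).toList).Nodup) :
    p.countP (fun e => decide ((e.1, e.2.2) ∈ (thompson R b).back)) ≤ 1 := by
  by_contra hcon
  push_neg at hcon
  obtain ⟨i, j, hjn, hij, hPi, hPj⟩ := exists_two_of_countP hcon
  have hin : i < p.length := hij.trans hjn
  have hne : p ≠ [] := List.ne_nil_of_length_pos (by omega)
  have hlast : p.getLast? = some (p.getLast hne) := List.getLast?_eq_getLast hne
  obtain ⟨L, hL⟩ : ∃ L, L = p.map Prod.fst ++ (p.getLast?.map (fun e => e.2.2)).toList :=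
    ⟨_, rfl⟩
  rw [← hL] at hnodup
  have hLlen : L.length = p.length + 1 := by
    rw [hL, List.length_append, List.length_map, hlast]; simp
  obtain ⟨u, hu0⟩ : ∃ u : ℕ → ℕ, u = fun k => L.getD k 0 := ⟨_, rfl⟩
  have hu : ∀ k (h : k < p.length + 1), u k = L[k]'(by omega) := by
    intro k h; rw [hu0]; exact List.getD_eq_getElem L 0 (by omega)
  have hinj : ∀ a b', a < p.length + 1 → b' < p.length + 1 → u a = u b' → a = b' := by
    intro a b' ha hb' h
    rw [hu a ha, hu b' hb'] at h
    exact (hnodup.getElem_inj_iff).mp h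
  have hes : ∀ k (h : k < p.length), (p[k]'h).1 = u k := by
    intro k h
    rw [hu k (by omega), List.getElem_of_eq hL,
      List.getElem_append_left (by simpa using h), List.getElem_map]
  have htgt : ∀ k (h : k < p.length), (p[k]'h).2.2 = u (k + 1) := by
    intro k h
    rcases Nat.lt_or_ge (k+1) p.length with h2 | h2
    · have := List.isChain_iff_getElem.mp hchain k (by omega)
      rw [hu (k+1) (by omega), List.getElem_of_eq hL,
        List.getElem_append_left (by simpa using h2), List.getElem_map]
      simpa [List.get_eq_getElem] using this
    · rw [hu (k+1) (by omega), List.getElem_of_eq hL,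
        List.getElem_append_right (by simp; omega)]
      simp only [List.length_map, hlast, Option.map_some, Option.toList_some]
      have h1 : k + 1 - p.length = 0 := by omega
      have h2' : p.getLast hne = p[k]'h := by
        rw [List.getLast_eq_getElem]; congr 1; omega
      simp [h1, h2']
  have hetrans : ∀ k (h : k < p.length),
      ((p[k]'h).1, (p[k]'h).2.1, (p[k]'h).2.2) ∈ (thompson R b).trans := by
    intro k h; exact hmem _ (List.getElem_mem h)
  have hbi : (u i, u (i+1)) ∈ (thompson R b).back := by
    rw [← hes i hin, ← htgt i hin]; simpa using hPi
  have hbj : (u j, u (j+1)) ∈ (thompson R b).back := by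
    rw [← hes j hjn, ← htgt j hjn]; simpa using hPj
  obtain ⟨hxi, hpi, hgi, mi, hm1i, hm2i, E1i, E2i⟩ := thompson_back_struct R b hbi
  obtain ⟨hxj, hpj, hgj, mj, hm1j, hm2j, E1j, E2j⟩ := thompson_back_struct R b hbj
  by_cases hcd : u (i+1) = u (j+1)
  · have := hinj (i+1) (j+1) (by omega) (by omega) hcd
    omega
  by_cases hnest : u (i+1) ≤ u (j+1) + 1 ∧ u (j+1) + 1 < mi
  · obtain ⟨k, hk1, hk2, hk3, hk4⟩ := nat_ivt_up
      (fun k => u (j+1) ≤ u k ∧ u k < mj) (show i+1 ≤ j by omega)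
      (by omega) (by omega)
    have hkn : k < p.length := by omega
    rcases E2j (p[k]'hkn).1 (p[k]'hkn).2.1 (p[k]'hkn).2.2 (hetrans k hkn)
        (by rw [htgt k hkn]; exact hk4.1) (by rw [htgt k hkn]; exact hk4.2) with hc | hc
    · rw [hes k hkn] at hc; exact hk3 hc
    · rw [htgt k hkn] at hc
      have := hinj (k+1) (j+1) (by omega) (by omega) hc
      omega
  · obtain ⟨k, hk1, hk2, hk3, hk4⟩ := nat_ivt_down
      (fun k => u (i+1) ≤ u k ∧ u k < mi) (show i+1 ≤ j by omega)
      (by constructor <;> omega) (by omega)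
    have hkn : k < p.length := by omega
    rcases E1i (p[k]'hkn).1 (p[k]'hkn).2.1 (p[k]'hkn).2.2 (hetrans k hkn)
        (by rw [hes k hkn]; exact hk3.1) (by rw [hes k hkn]; exact hk3.2) with hc | hc
    · rw [htgt k hkn] at hc; exact hk4 hc
    · rw [hes k hkn] at hc
      have := hinj k i (by omega) (by omega) (by omega)
      omega
end

section
/- Every binary tree with t > 1 nodes contains an edge whose removal splits the tree into two connected components, each with at most (2/3)t + 1 nodes. -/
/-- Rooted binary trees: every node has at most two children. -/
inductive BTree where
  | leaf : BTree
  | one : BTree → BTree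
  | two : BTree → BTree → BTree

namespace BTree

def size : BTree → ℕ
  | leaf => 1
  | one t => t.size + 1
  | two l r => l.size + r.size + 1

/-- `Desc t s`: `s` is the subtree hanging below some edge of `t`, i.e. the
subtree rooted at a proper descendant of the root of `t`.  Removing that edge
splits `t` into `s` and the rest. -/
inductive Desc : BTree → BTree → Prop where
  | one_c (t : BTree) : Desc (one t) t
  | two_l (l r : BTree) : Desc (two l r) l
  | two_r (l r : BTree) : Desc (two l r) r
  | one_t {t s : BTree} : Desc t s → Desc (one t) s
  | two_lt {l s : BTree} (r : BTree) : Desc l s → Desc (two l r) s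
  | two_rt {r s : BTree} (l : BTree) : Desc r s → Desc (two l r) s

theorem size_pos (u : BTree) : 1 ≤ u.size := by
  induction u <;> simp [size]

theorem aux (n : ℕ) : ∀ (u : BTree), n ≤ 3 * u.size + 3 →
    ∃ s, (s = u ∨ Desc u s) ∧ s.size ≤ u.size ∧
      3 * s.size ≤ 2 * n + 3 ∧ n ≤ 3 * s.size + 3 := by
  intro u
  induction u with
  | leaf =>
    intro h
    exact ⟨leaf, Or.inl rfl, le_rfl, by simp [size], h⟩
  | one c ih =>
    intro h
    by_cases hc : 3 * (one c).size ≤ 2 * n + 3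
    · exact ⟨one c, Or.inl rfl, le_rfl, hc, h⟩
    · have hcs := size_pos c
      have hn : n ≤ 3 * c.size + 3 := by simp [size] at hc; omega
      obtain ⟨s, hs, hsize, h1, h2⟩ := ih hn
      refine ⟨s, Or.inr ?_, ?_, h1, h2⟩
      · rcases hs with rfl | hs
        · exact Desc.one_c s
        · exact Desc.one_t hs
      · simp [size]; omega
  | two l r ihl ihr =>
    intro h
    by_cases hc : 3 * (two l r).size ≤ 2 * n + 3
    · exact ⟨two l r, Or.inl rfl, le_rfl, hc, h⟩
    · simp [size] at hc
      by_cases hlr : r.size ≤ l.size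
      · have hn : n ≤ 3 * l.size + 3 := by omega
        obtain ⟨s, hs, hsize, h1, h2⟩ := ihl hn
        refine ⟨s, Or.inr ?_, ?_, h1, h2⟩
        · rcases hs with rfl | hs
          · exact Desc.two_l s r
          · exact Desc.two_lt r hs
        · simp [size]; omega
      · have hn : n ≤ 3 * r.size + 3 := by omega
        obtain ⟨s, hs, hsize, h1, h2⟩ := ihr hn
        refine ⟨s, Or.inr ?_, ?_, h1, h2⟩
        · rcases hs with rfl | hs
          · exact Desc.two_r l s
          · exact Desc.two_rt l hs
        · simp [size]; omega

end BTree

/-- every binary tree with `t > 1` nodes has an edge whose removal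
splits it into two components each with at most `(2/3)t + 1` nodes. -/
theorem binary_tree_separator_edge (t : BTree) (ht : 1 < t.size) :
    ∃ s : BTree, BTree.Desc t s ∧
      3 * s.size ≤ 2 * t.size + 3 ∧
      3 * (t.size - s.size) ≤ 2 * t.size + 3 := by
  set n := t.size with hn
  match t, hn with
  | BTree.leaf, hn => simp [BTree.size] at hn; omega
  | BTree.one c, hn =>
    have hc : n ≤ 3 * c.size + 3 := by
      have := BTree.size_pos c; simp [BTree.size] at hn; omega
    obtain ⟨s, hs, hsize, h1, h2⟩ := BTree.aux n c hc
    refine ⟨s, ?_, h1, ?_⟩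
    · rcases hs with rfl | hs
      · exact BTree.Desc.one_c s
      · exact BTree.Desc.one_t hs
    · simp [BTree.size] at hn; omega
  | BTree.two l r, hn =>
    by_cases hlr : r.size ≤ l.size
    · have hc : n ≤ 3 * l.size + 3 := by
        have := BTree.size_pos l; simp [BTree.size] at hn; omega
      obtain ⟨s, hs, hsize, h1, h2⟩ := BTree.aux n l hc
      refine ⟨s, ?_, h1, ?_⟩
      · rcases hs with rfl | hs
        · exact BTree.Desc.two_l s r
        · exact BTree.Desc.two_lt r hs
      · simp [BTree.size] at hn; omega
    · have hc : n ≤ 3 * r.size + 3 := by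
        have := BTree.size_pos r; simp [BTree.size] at hn; omega
      obtain ⟨s, hs, hsize, h1, h2⟩ := BTree.aux n r hc
      refine ⟨s, ?_, h1, ?_⟩
      · rcases hs with rfl | hs
        · exact BTree.Desc.two_r l s
        · exact BTree.Desc.two_rt l hs
      · simp [BTree.size] at hn; omega
end

section
/- For any binary tree T with N nodes and any parameter x ≥ 1, there exists a partition of the nodes of T into connected clusters such that every cluster has at most x nodes and the number of clusters is O(⌈N/x⌉); more precisely, a partition with at most c·⌈N/x⌉ clusters for some absolute constant c exists. -/
open SimpleGraph Finset
set_option linter.unusedSectionVars false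
set_option maxHeartbeats 1000000
variable {V : Type} [Fintype V] [DecidableEq V]

lemma reach_induce {G : SimpleGraph V} {s : Set V} :
    ∀ {a b : V} (p : G.Walk a b), (∀ z ∈ p.support, z ∈ s) →
      ∀ (ha : a ∈ s) (hb : b ∈ s), (G.induce s).Reachable ⟨a, ha⟩ ⟨b, hb⟩ := by
  intro a b p
  induction p with
  | nil => intro _ ha hb; rfl
  | @cons a' b' c' h q ih =>
    intro hs ha hb
    have hw : b' ∈ s := hs b' (by simp)
    refine Reachable.trans ?_ (ih (fun z hz => hs z (by simp [hz])) hw hb)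
    exact SimpleGraph.Adj.reachable (by exact h)

lemma dist_split {G : SimpleGraph V} (hc : G.Connected) {a b : V} (p : G.Walk a b)
    (hp : p.length = G.dist a b) {z : V} (hz : z ∈ p.support) :
    G.dist a z + G.dist z b = G.dist a b := by
  have h1 := SimpleGraph.dist_le (p.takeUntil z hz)
  have h2 := SimpleGraph.dist_le (p.dropUntil z hz)
  have h3 : (p.takeUntil z hz).length + (p.dropUntil z hz).length = p.length := by
    rw [← SimpleGraph.Walk.length_append, SimpleGraph.Walk.take_spec]
  have h4 := hc.dist_triangle (u := a) (v := z) (w := b)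
  omega

lemma first_step {G : SimpleGraph V} (hc : G.Connected) {a b : V} (h : G.dist a b ≠ 0) :
    ∃ w, G.Adj a w ∧ G.dist w b + 1 = G.dist a b := by
  obtain ⟨p, hp⟩ := SimpleGraph.exists_walk_of_dist_ne_zero h
  cases p with
  | nil => exact (h SimpleGraph.dist_self).elim
  | @cons _ w _ hadj q =>
    refine ⟨w, hadj, ?_⟩
    have h1 := SimpleGraph.dist_le q
    have h2 := hc.dist_triangle (u := a) (v := w) (w := b)
    have h3 : G.dist a w ≤ 1 := SimpleGraph.dist_le hadj.toWalk
    simp [SimpleGraph.Walk.length_cons] at hp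
    omega

lemma key (G : SimpleGraph V) (hT : G.IsTree)
    (hdeg : ∀ v, (G.neighborSet v).ncard ≤ 3) (s : ℕ) (hs : 1 ≤ s)
    (hN : 2*s ≤ Fintype.card V) :
    ∃ S : Finset V, s ≤ S.card ∧ S.card ≤ 2*s - 1 ∧
      (G.induce (↑S : Set V)).Connected ∧
      (G.induce (↑(univ \ S) : Set V)).Connected := by
  classical
  have hc : G.Connected := hT.isConnected
  have hN2 : 2 ≤ Fintype.card V := by omega
  -- a leaf r
  have hleaf : ∃ r : V, G.degree r ≤ 1 := by
    by_contra hno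
    push_neg at hno
    have hsum : ∑ v : V, G.degree v = 2 * G.edgeFinset.card :=
      SimpleGraph.sum_degrees_eq_twice_card_edges G
    have hcard : G.edgeFinset.card + 1 = Fintype.card V := hT.card_edgeFinset
    have : 2 * Fintype.card V ≤ ∑ v : V, G.degree v := by
      calc 2 * Fintype.card V = ∑ _v : V, 2 := by simp [mul_comm]
        _ ≤ ∑ v : V, G.degree v := Finset.sum_le_sum (fun v _ => hno v)
    omega
  obtain ⟨r, hr⟩ := hleaf
  set D : V → Finset V := fun v => univ.filter (fun u => G.dist r u = G.dist r v + G.dist v u) with hD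
  have hmemD : ∀ v u, u ∈ D v ↔ G.dist r u = G.dist r v + G.dist v u := by
    intro v u; simp [hD]
  have hdself : ∀ a : V, G.dist a a = 0 := fun a => SimpleGraph.dist_self
  have hdzero : ∀ a b : V, G.dist a b = 0 → a = b := by
    intro a b hab; exact (hc.dist_eq_zero_iff).mp hab
  have htri : ∀ a b c : V, G.dist a c ≤ G.dist a b + G.dist b c := fun a b c => hc.dist_triangle
  have hadj1 : ∀ a b : V, G.Adj a b → G.dist a b = 1 := by
    intro a b hab; exact SimpleGraph.dist_eq_one_iff_adj.mpr hab
  have hDself : ∀ v, v ∈ D v := by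
    intro v; rw [hmemD]; simp [hdself]
  have hDr : D r = univ := by
    ext u; rw [hmemD]; simp [hdself]
  have hmono : ∀ v w u, w ∈ D v → u ∈ D w → u ∈ D v := by
    intro v w u hw hu
    rw [hmemD] at *
    have h1 := htri v w u
    have h2 := htri r v u
    omega
  have hnotmem : ∀ v w, G.dist r w = G.dist r v + 1 → v ∉ D w := by
    intro v w hw hmem
    rw [hmemD] at hmem
    omega
  have hchild : ∀ v u, u ∈ D v → u ≠ v → ∃ w, G.Adj v w ∧ G.dist r w = G.dist r v + 1 ∧ u ∈ D w := by
    intro v u hu hne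
    rw [hmemD] at hu
    have hvu : G.dist v u ≠ 0 := fun h0 => hne (hdzero v u h0).symm
    obtain ⟨w, hadj, hw⟩ := first_step hc hvu
    have h1 : G.dist v w = 1 := hadj1 _ _ hadj
    have h2 := htri r v w
    have h3 := htri r w u
    refine ⟨w, hadj, by omega, ?_⟩
    rw [hmemD]; omega
  -- the minimizer
  set Q : Finset V := univ.filter (fun v => s ≤ (D v).card) with hQ
  have hrQ : r ∈ Q := by
    simp only [hQ, Finset.mem_filter, Finset.mem_univ, true_and, hDr, Finset.card_univ]
    omega
  obtain ⟨v, hvQ, hmin⟩ := Finset.exists_min_image Q (fun v => (D v).card) ⟨r, hrQ⟩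
  have hvs : s ≤ (D v).card := by
    simpa [hQ] using hvQ
  -- the unique neighbor of the leaf r
  obtain ⟨u0, hu0⟩ := Fintype.exists_ne_of_one_lt_card (by omega) r
  have hdru0 : G.dist r u0 ≠ 0 := fun h0 => hu0 (hdzero r u0 h0).symm
  obtain ⟨w0, hw0adj, _⟩ := first_step hc hdru0
  have hnbr : G.neighborFinset r = {w0} := by
    have h1 : w0 ∈ G.neighborFinset r := by simpa using hw0adj
    have h2 : (G.neighborFinset r).card ≤ 1 := hr
    have h3 : 1 ≤ (G.neighborFinset r).card := Finset.card_pos.mpr ⟨w0, h1⟩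
    obtain ⟨a, ha⟩ := Finset.card_eq_one.mp (le_antisymm h2 h3)
    rw [ha] at h1 ⊢
    simp at h1; rw [h1]
  have hDw0 : ∀ u : V, u ≠ r → u ∈ D w0 := by
    intro u hu
    have hdr : G.dist r u ≠ 0 := fun h0 => hu (hdzero r u h0).symm
    obtain ⟨w, hwadj, hw⟩ := first_step hc hdr
    have : w ∈ G.neighborFinset r := by simpa using hwadj
    rw [hnbr] at this
    simp at this; subst this
    rw [hmemD]
    have := hadj1 _ _ hwadj
    omega
  have hrw0 : r ∉ D w0 := hnotmem r w0 (by have := hadj1 r w0 hw0adj; simp [hdself, this])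
  have hw0card : s ≤ (D w0).card := by
    have hsub : univ \ {r} ⊆ D w0 := by
      intro u hu; simp at hu; exact hDw0 u hu
    have := Finset.card_le_card hsub
    rw [Finset.card_sdiff_of_subset (by simp)] at this
    simp at this
    omega
  have hw0Q : w0 ∈ Q := by simp [hQ, hw0card]
  have hvlt : (D v).card < Fintype.card V := by
    have h1 := hmin w0 hw0Q
    have h2 : (D w0).card < Fintype.card V := by
      have : D w0 ⊂ univ := Finset.ssubset_univ_iff.mpr (fun h => hrw0 (h ▸ Finset.mem_univ r))
      simpa using Finset.card_lt_card this
    omega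
  have hvr : v ≠ r := by
    intro h; subst h
    rw [hDr, Finset.card_univ] at hvlt; omega
  -- upper bound on the size of D v
  have hdrv : G.dist r v ≠ 0 := fun h0 => hvr (hdzero r v h0).symm
  set C : Finset V := (G.neighborFinset v).filter (fun w => G.dist r w = G.dist r v + 1) with hC
  have hC2 : C.card ≤ 2 := by
    obtain ⟨w1, hw1adj, hw1⟩ := first_step hc (show G.dist v r ≠ 0 by rwa [SimpleGraph.dist_comm])
    have hw1' : G.dist r w1 + 1 = G.dist r v := by
      rw [SimpleGraph.dist_comm (u := w1) (v := r), SimpleGraph.dist_comm (u := v) (v := r)] at hw1; exact hw1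
    have hsub : C ⊆ (G.neighborFinset v).erase w1 := by
      intro w hw
      simp only [hC, Finset.mem_filter] at hw
      refine Finset.mem_erase.mpr ⟨?_, hw.1⟩
      intro h; subst h; omega
    have hdeg3 : (G.neighborFinset v).card ≤ 3 := by
      have := hdeg v
      rwa [SimpleGraph.neighborFinset, ← Set.ncard_eq_toFinset_card'] at *
    have := Finset.card_le_card hsub
    have h2 : ((G.neighborFinset v).erase w1).card = (G.neighborFinset v).card - 1 :=
      Finset.card_erase_of_mem (by simpa using hw1adj)
    omega
  have hCchild : ∀ w ∈ C, (D w).card ≤ s - 1 := by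
    intro w hw
    simp only [hC, Finset.mem_filter, SimpleGraph.mem_neighborFinset] at hw
    have hwDv : w ∈ D v := by rw [hmemD]; rw [hadj1 v w hw.1]; omega
    have hsub : D w ⊆ D v := fun u hu => hmono v w u hwDv hu
    have hvD : v ∉ D w := hnotmem v w hw.2
    have hlt : (D w).card < (D v).card :=
      Finset.card_lt_card ⟨hsub, fun h => hvD (h (hDself v))⟩
    by_contra hcon
    push_neg at hcon
    have : w ∈ Q := by simp [hQ]; omega
    have := hmin w this
    omega
  have hDvsub : D v ⊆ insert v (C.biUnion (fun w => D w)) := by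
    intro u hu
    rcases eq_or_ne u v with h | h
    · simp [h]
    · obtain ⟨w, hadjw, hdw, huw⟩ := hchild v u hu h
      refine Finset.mem_insert_of_mem (Finset.mem_biUnion.mpr ⟨w, ?_, huw⟩)
      simp [hC, hdw, hadjw]
  have hupper : (D v).card ≤ 2 * s - 1 := by
    have h1 := Finset.card_le_card hDvsub
    have h2 := Finset.card_insert_le v (C.biUnion (fun w => D w))
    have h3 : (C.biUnion (fun w => D w)).card ≤ ∑ w ∈ C, (D w).card :=
      Finset.card_biUnion_le
    have h4 : ∑ w ∈ C, (D w).card ≤ C.card * (s - 1) :=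
      Finset.sum_le_card_nsmul C _ (s-1) (fun w hw => hCchild w hw)
    have h5 : C.card * (s-1) ≤ 2 * (s-1) := Nat.mul_le_mul_right _ hC2
    omega
  -- connectivity of D v
  have hconn1 : (G.induce (↑(D v) : Set V)).Connected := by
    rw [SimpleGraph.connected_iff]
    constructor
    · intro ⟨a, ha⟩ ⟨b, hb⟩
      have hgen : ∀ (u : V) (hu : u ∈ (↑(D v) : Set V)),
          (G.induce (↑(D v) : Set V)).Reachable ⟨v, by simpa using hDself v⟩ ⟨u, hu⟩ := by
        intro u hu
        obtain ⟨p, hp⟩ := hc.exists_walk_length_eq_dist v u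
        refine reach_induce p ?_ _ _
        intro z hz
        have hsplit := dist_split hc p hp hz
        have h1 : u ∈ D v := by simpa using hu
        rw [hmemD] at h1
        have h2 := htri r v z
        have h3 := htri r z u
        simp only [Finset.coe_filter, hD, Set.mem_setOf_eq]
        constructor
        · exact Finset.mem_univ z
        · omega
      exact ((hgen a ha).symm).trans (hgen b hb)
    · exact ⟨⟨v, by simpa using hDself v⟩⟩
  -- connectivity of the complement
  have hrcomp : r ∈ univ \ D v := by
    simp only [Finset.mem_sdiff, Finset.mem_univ, true_and]
    intro hmem
    rw [hmemD] at hmem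
    simp [hdself] at hmem
    omega
  have hconn2 : (G.induce (↑(univ \ D v) : Set V)).Connected := by
    rw [SimpleGraph.connected_iff]
    constructor
    · intro ⟨a, ha⟩ ⟨b, hb⟩
      have hgen : ∀ (u : V) (hu : u ∈ (↑(univ \ D v) : Set V)),
          (G.induce (↑(univ \ D v) : Set V)).Reachable ⟨r, by simpa using hrcomp⟩ ⟨u, hu⟩ := by
        intro u hu
        obtain ⟨p, hp⟩ := hc.exists_walk_length_eq_dist r u
        refine reach_induce p ?_ _ _
        intro z hz
        have hsplit := dist_split hc p hp hz
        have h1 : u ∉ D v := by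
          simp only [Finset.coe_sdiff, Finset.coe_univ, Set.mem_diff, Finset.mem_coe] at hu
          exact hu.2
        simp only [Finset.coe_sdiff, Finset.coe_univ, Set.mem_diff, Finset.mem_coe]
        refine ⟨trivial, ?_⟩
        intro hzD
        apply h1
        rw [hmemD] at hzD ⊢
        have h2 := htri v z u
        have h3 := htri r v u
        omega
      exact ((hgen a ha).symm).trans (hgen b hb)
    · exact ⟨⟨r, by simpa using hrcomp⟩⟩
  exact ⟨D v, hvs, hupper, hconn1, hconn2⟩

noncomputable def isoII (G : SimpleGraph V) (t : Set V) (u : Set ↥t) :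
    (G.induce t).induce u ≃g G.induce (Subtype.val '' u) where
  toEquiv := Equiv.Set.image Subtype.val u Subtype.val_injective
  map_rel_iff' := by intro a b; rfl

lemma acyclic_induce {G : SimpleGraph V} (h : G.IsAcyclic) (s : Set V) :
    (G.induce s).IsAcyclic := by
  intro v c hc
  exact h ((c.map (SimpleGraph.Embedding.induce s).toHom))
    (hc.map (Subtype.val_injective))

lemma deg_induce {G : SimpleGraph V} (hdeg : ∀ v, (G.neighborSet v).ncard ≤ 3) (s : Set V)
    (a : ↥s) : ((G.induce s).neighborSet a).ncard ≤ 3 := by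
  have h1 : Subtype.val '' ((G.induce s).neighborSet a) ⊆ G.neighborSet ↑a := by
    rintro _ ⟨b, hb, rfl⟩; exact hb
  calc ((G.induce s).neighborSet a).ncard
      = (Subtype.val '' ((G.induce s).neighborSet a)).ncard :=
        (Set.ncard_image_of_injective _ Subtype.val_injective).symm
    _ ≤ (G.neighborSet ↑a).ncard := Set.ncard_le_ncard h1 (Set.toFinite _)
    _ ≤ 3 := hdeg _


lemma aux (G : SimpleGraph V) (hac : G.IsAcyclic)
    (hdeg : ∀ v, (G.neighborSet v).ncard ≤ 3) (x s : ℕ) (hs : 1 ≤ s) (hsx : 2*s - 1 ≤ x) :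
    ∀ n (t : Finset V), t.card ≤ n → (G.induce (↑t : Set V)).Connected →
      ∃ Ps : Finset (Finset V),
        (∀ p ∈ Ps, p.Nonempty ∧ p.card ≤ x ∧ (G.induce (↑p : Set V)).Connected) ∧
        (↑Ps : Set (Finset V)).PairwiseDisjoint id ∧ Ps.sup id = t ∧
        Ps.card ≤ (t.card + s - 1)/s := by
  intro n
  induction n with
  | zero =>
    intro t htn hconn
    exfalso
    obtain ⟨⟨a, ha⟩⟩ := hconn.nonempty
    have : a ∈ t := by simpa using ha
    have := Finset.card_pos.mpr ⟨a, this⟩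
    omega
  | succ n ih =>
    intro t htn hconn
    have htne : 1 ≤ t.card := by
      obtain ⟨⟨a, ha⟩⟩ := hconn.nonempty
      exact Finset.card_pos.mpr ⟨a, by simpa using ha⟩
    by_cases hx : t.card ≤ x
    · refine ⟨{t}, ?_, ?_, ?_, ?_⟩
      · intro p hp
        simp only [Finset.mem_singleton] at hp
        subst hp
        exact ⟨Finset.card_pos.mp htne, hx, hconn⟩
      · simp
      · simp
      · have : 1 ≤ (t.card + s - 1)/s := (Nat.one_le_div_iff (by omega)).mpr (by omega)
        simpa using this
    · push_neg at hx
      -- apply key' to the induced graph on t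
      have hcardt : Fintype.card (↑t : Set V) = t.card := Fintype.card_coe t
      have htree : (G.induce (↑t : Set V)).IsTree :=
        ⟨hconn, acyclic_induce hac _⟩
      obtain ⟨S', hS'l, hS'u, hS'conn, hS'comp⟩ :=
        key (G.induce (↑t : Set V)) htree (deg_induce hdeg _) s hs (by omega)
      set emb : ↥(↑t : Set V) ↪ V := Function.Embedding.subtype _ with hemb
      set S2 : Finset V := S'.map emb with hS2
      have hS2card : S2.card = S'.card := Finset.card_map _
      have hS2t : S2 ⊆ t := by
        intro a ha
        simp only [hS2, Finset.mem_map, hemb, Function.Embedding.coe_subtype] at ha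
        obtain ⟨⟨b, hb⟩, _, rfl⟩ := ha
        simpa using hb
      have hS2conn : (G.induce (↑S2 : Set V)).Connected := by
        have heq : (↑S2 : Set V) = Subtype.val '' (↑S' : Set ↥(↑t : Set V)) := by
          rw [hS2, Finset.coe_map]; rfl
        rw [heq]
        exact (isoII G (↑t : Set V) (↑S' : Set ↥(↑t : Set V))).connected_iff.mp hS'conn
      have hsdiff : t \ S2 = ((univ : Finset ↥(↑t : Set V)) \ S').map emb := by
        ext a
        simp only [Finset.mem_sdiff, Finset.mem_map, hemb, Function.Embedding.coe_subtype,
          Finset.mem_univ, true_and, hS2]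
        constructor
        · rintro ⟨hat, hns⟩
          refine ⟨⟨a, by simpa using hat⟩, ?_, rfl⟩
          intro hmem
          exact hns ⟨_, hmem, rfl⟩
        · rintro ⟨⟨b, hb⟩, hnS', rfl⟩
          refine ⟨by simpa using hb, ?_⟩
          rintro ⟨⟨c, hc⟩, hcS', hce⟩
          simp only at hce
          subst hce
          exact hnS' hcS'
      have hcompconn : (G.induce (↑(t \ S2) : Set V)).Connected := by
        have heq : (↑(t \ S2) : Set V)
            = Subtype.val '' (↑((univ : Finset ↥(↑t : Set V)) \ S') : Set ↥(↑t : Set V)) := by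
          rw [hsdiff, Finset.coe_map]; rfl
        rw [heq]
        exact (isoII G _ _).connected_iff.mp hS'comp
      have hcardlt : (t \ S2).card ≤ n := by
        have h1 : (t \ S2).card = t.card - S2.card := Finset.card_sdiff_of_subset hS2t
        omega
      obtain ⟨Ps', hPs'parts, hPs'disj, hPs'sup, hPs'card⟩ := ih (t \ S2) hcardlt hcompconn
      have hsubPs' : ∀ p ∈ Ps', p ⊆ t \ S2 := by
        intro p hp
        rw [← hPs'sup]
        exact Finset.le_sup (f := id) hp
      have hS2notmem : S2 ∉ Ps' := by
        intro hmem
        have h1 := hsubPs' S2 hmem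
        obtain ⟨a, ha⟩ : S2.Nonempty := Finset.card_pos.mp (by omega)
        have := h1 ha
        simp only [Finset.mem_sdiff] at this
        exact this.2 ha
      refine ⟨insert S2 Ps', ?_, ?_, ?_, ?_⟩
      · intro p hp
        rcases Finset.mem_insert.mp hp with h | h
        · subst h
          exact ⟨Finset.card_pos.mp (by omega), by omega, hS2conn⟩
        · exact hPs'parts p h
      · rw [Finset.coe_insert]
        refine Set.PairwiseDisjoint.insert hPs'disj ?_
        intro p hp _
        simp only [id]
        exact Finset.disjoint_left.mpr (fun a haS2 hap =>
          (Finset.mem_sdiff.mp (hsubPs' p hp hap)).2 haS2)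
      · rw [Finset.sup_insert, hPs'sup]
        simpa using Finset.union_sdiff_of_subset hS2t
      · rw [Finset.card_insert_of_notMem hS2notmem]
        have h1 : (t \ S2).card = t.card - S2.card := Finset.card_sdiff_of_subset hS2t
        have h2 : (t \ S2).card + s ≤ t.card := by omega
        have h3 : ((t \ S2).card + s - 1) / s + 1 = ((t \ S2).card + s - 1 + s) / s := by
          rw [Nat.add_div_right _ (by omega)]
        have h4 : ((t \ S2).card + s - 1 + s) / s ≤ (t.card + s - 1) / s :=
          Nat.div_le_div_right (by omega)
        omega

/-- for some absolute constant `c`, every binary tree (here: a tree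
of maximum degree `3`) with `N` nodes and every `x ≥ 1` admits a partition of its
vertex set into connected clusters, each of size at most `x`, with at most
`c·⌈N/x⌉` clusters. -/
theorem tree_cluster_partition :
    ∃ c : ℕ, ∀ (V : Type) (_ : Fintype V) (_ : DecidableEq V) (G : SimpleGraph V),
      G.IsTree → (∀ v : V, (G.neighborSet v).ncard ≤ 3) →
      ∀ x : ℕ, 1 ≤ x →
        ∃ P : Finpartition (Finset.univ : Finset V),
          (∀ p ∈ P.parts, p.card ≤ x ∧ (G.induce (↑p : Set V)).Connected) ∧
          P.parts.card ≤ c * ((Fintype.card V + x - 1) / x) := by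
  refine ⟨2, ?_⟩
  intro V hF hD G hT hdeg x hx
  set s : ℕ := (x+1)/2 with hsdef
  have hs : 1 ≤ s := by omega
  have hsx : 2*s - 1 ≤ x := by omega
  have hconn : (G.induce (↑(Finset.univ : Finset V) : Set V)).Connected := by
    rw [Finset.coe_univ]
    exact (SimpleGraph.induceUnivIso G).connected_iff.mpr hT.isConnected
  obtain ⟨Ps, hparts, hdisj, hsup, hcard⟩ :=
    aux G hT.2 hdeg x s hs hsx (Fintype.card V) Finset.univ
      (by rw [Finset.card_univ]) hconn
  refine ⟨⟨Ps, ?_, ?_, ?_⟩, ?_, ?_⟩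
  · exact Finset.supIndep_iff_pairwiseDisjoint.mpr hdisj
  · exact hsup
  · intro hmem
    obtain ⟨a, ha⟩ := (hparts _ hmem).1
    simp at ha
  · intro p hp
    exact ⟨(hparts p hp).2.1, (hparts p hp).2.2⟩
  · have hN : 1 ≤ Fintype.card V := by
      have : Nonempty V := hT.isConnected.nonempty
      exact Fintype.card_pos
    simp only [Finset.card_univ] at hcard
    show Ps.card ≤ 2 * ((Fintype.card V + x - 1) / x)
    have h1 : Fintype.card V + x - 1
        = ((Fintype.card V + x - 1)/x) * x + (Fintype.card V + x - 1) % x := by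
      rw [mul_comm]; exact (Nat.div_add_mod _ _).symm
    have hmod : (Fintype.card V + x - 1) % x < x := Nat.mod_lt _ (by omega)
    have hNk : Fintype.card V ≤ ((Fintype.card V + x - 1)/x) * x := by omega
    have hk2 : ((Fintype.card V + x - 1)/x) * x ≤ ((Fintype.card V + x - 1)/x) * (2*s) :=
      Nat.mul_le_mul_left _ (by omega)
    have h5 : Fintype.card V + s - 1 < (2*((Fintype.card V + x - 1)/x)+1)*s := by
      have hr : (2*((Fintype.card V + x - 1)/x)+1)*s
          = 2*(((Fintype.card V + x - 1)/x) * s) + s := by ring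
      have hr2 : ((Fintype.card V + x - 1)/x) * (2*s)
          = 2*(((Fintype.card V + x - 1)/x)*s) := by ring
      omega
    have h6 : (Fintype.card V + s - 1)/s < 2*((Fintype.card V + x - 1)/x)+1 :=
      (Nat.div_lt_iff_lt_mul (by omega)).mpr h5
    omega
end

section
/- Let P be a partial-TNFA obtained from a cluster C of the parse tree of a TNFA A, with more than 2 states. Then there is a partition of P into two partial-TNFAs P_O (containing the start and accepting states of P) and P_I, each with at most (2/3)m + 2 states where m is the number of states of P, such that every transition of A from a state of P_O to a state of P_I ends at the start state θ_{P_I} of P_I, and every transition from a state of P_I to a state of P_O starts at the accepting state φ_{P_I} of P_I. -/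
variable {α : Type} [DecidableEq α]

/-- the subexpression of `R` at position `p` in the parse tree
(`false` = left/only child, `true` = right child). -/
def Regex.sub? : Regex α → List Bool → Option (Regex α)
  | r, [] => some r
  | .cat S _, false :: p => S.sub? p
  | .cat _ T, true :: p => T.sub? p
  | .alt S _, false :: p => S.sub? p
  | .alt _ T, true :: p => T.sub? p
  | .star S, false :: p => S.sub? p
  | _, _ :: _ => none

/-- base offset of the Thompson sub-automaton for the subexpression at position
`p`, when the whole automaton is built at offset `b`; the node at `p` associates
the two states `baseAt R b p` (its start state) and `baseAt R b p + 1` (its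
accepting state). -/
def baseAt : Regex α → ℕ → List Bool → Option ℕ
  | _, b, [] => some b
  | .cat S _, b, false :: p => baseAt S (b+2) p
  | .cat S T, b, true :: p => baseAt T (b+2+2*S.size) p
  | .alt S _, b, false :: p => baseAt S (b+2) p
  | .alt S T, b, true :: p => baseAt T (b+2+2*S.size) p
  | .star S, b, false :: p => baseAt S (b+2) p
  | _, _, _ :: _ => none

/-- `C` is a cluster of the parse tree of `R`: a nonempty set of valid positions
that is connected (it has a root `r` such that every member is a descendant of
`r` and the whole tree path from `r` down to any member stays in `C`). -/
def IsCluster (R : Regex α) (C : Finset (List Bool)) : Prop :=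
  C.Nonempty ∧ (∀ p ∈ C, (R.sub? p).isSome) ∧
    ∃ r ∈ C, ∀ p ∈ C, r <+: p ∧ ∀ q : List Bool, r <+: q → q <+: p → q ∈ C

/-- the set of states of the partial-TNFA induced by the cluster `C`. -/
def statesOf (R : Regex α) (C : Finset (List Bool)) : Finset ℕ :=
  C.biUnion (fun p => {(baseAt R 0 p).getD 0, (baseAt R 0 p).getD 0 + 1})

set_option linter.unusedSectionVars false
section Aux
variable {α : Type} [DecidableEq α]

lemma Regex.size_pos (R : Regex α) : 0 < R.size := by
  cases R <;> simp [Regex.size]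

lemma baseAt_isSome {R : Regex α} {p : List Bool} {S : Regex α} (h : R.sub? p = some S) (b : ℕ) :
    ∃ c, baseAt R b p = some c := by
  induction p generalizing R b with
  | nil => exact ⟨b, by cases R <;> rfl⟩
  | cons x p ih =>
    cases R <;> cases x <;> simp [Regex.sub?, baseAt] at h ⊢ <;> exact ih h _

lemma sub?_append_isSome {R : Regex α} {u v : List Bool} {S : Regex α}
    (h : R.sub? (u ++ v) = some S) : ∃ S', R.sub? u = some S' := by
  induction u generalizing R with
  | nil => exact ⟨R, by cases R <;> rfl⟩
  | cons x u ih =>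
    cases R <;> cases x <;> simp [Regex.sub?] at h ⊢ <;> exact ih h

lemma sub?_baseAt_append {R : Regex α} {p : List Bool} {S : Regex α} {b c : ℕ}
    (hs : R.sub? p = some S) (hb : baseAt R b p = some c) (q : List Bool) :
    R.sub? (p ++ q) = S.sub? q ∧ baseAt R b (p ++ q) = baseAt S c q := by
  induction p generalizing R b with
  | nil =>
    simp [Regex.sub?, baseAt] at hs hb
    subst hs; subst hb; exact ⟨rfl, rfl⟩
  | cons x p ih =>
    cases R <;> cases x <;> simp [Regex.sub?, baseAt] at hs hb ⊢ <;> exact ih hs hb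

lemma baseAt_range {p : List Bool} {R S : Regex α} {b c : ℕ}
    (hs : R.sub? p = some S) (hb : baseAt R b p = some c) :
    b ≤ c ∧ c + 2 * S.size ≤ b + 2 * R.size ∧ (p ≠ [] → b + 2 ≤ c) := by
  induction p generalizing R b with
  | nil =>
    simp [Regex.sub?, baseAt] at hs hb
    subst hs; subst hb; simp
  | cons x p ih =>
    cases R <;> cases x <;> simp only [Regex.sub?, baseAt, Regex.size, ne_eq,
        reduceCtorEq, not_false_eq_true, forall_const] at hs hb ⊢ <;>
      first
      | exact absurd hs (by simp)
      | (obtain ⟨h1, h2, h3⟩ := ih hs hb; refine ⟨by omega, by omega, by omega⟩)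

lemma baseAt_even {p : List Bool} {R : Regex α} {b c : ℕ} (hb : baseAt R b p = some c)
    (he : Even b) : Even c := by
  induction p generalizing R b with
  | nil =>
    have : some b = some c := by rw [← hb]; cases R <;> rfl
    cases this; exact he
  | cons x p ih =>
    cases R <;> cases x <;> simp [baseAt] at hb <;>
      first
      | exact ih hb (he.add even_two)
      | exact ih hb ((he.add even_two).add (even_two_mul _))

end Aux

theorem tst : True := trivial
section Aux2
variable {α : Type} [DecidableEq α]

lemma diverge {p q : List Bool} (h1 : ¬ p <+: q) (h2 : ¬ q <+: p) :
    ∃ u p' q', (p = u ++ false :: p' ∧ q = u ++ true :: q') ∨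
      (p = u ++ true :: p' ∧ q = u ++ false :: q') := by
  induction p generalizing q with
  | nil => exact absurd (List.nil_prefix) h1
  | cons a p ih =>
    cases q with
    | nil => exact absurd (List.nil_prefix) h2
    | cons b q =>
      by_cases hab : a = b
      · subst hab
        have h1' : ¬ p <+: q := fun h => h1 (List.cons_prefix_cons.mpr ⟨rfl, h⟩)
        have h2' : ¬ q <+: p := fun h => h2 (List.cons_prefix_cons.mpr ⟨rfl, h⟩)
        obtain ⟨u, p', q', h⟩ := ih h1' h2'
        refine ⟨a :: u, p', q', ?_⟩
        rcases h with ⟨hp, hq⟩ | ⟨hp, hq⟩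
        · exact Or.inl ⟨by simp [hp], by simp [hq]⟩
        · exact Or.inr ⟨by simp [hp], by simp [hq]⟩
      · cases a <;> cases b <;> simp at hab
        · exact ⟨[], p, q, Or.inl ⟨rfl, rfl⟩⟩
        · exact ⟨[], p, q, Or.inr ⟨rfl, rfl⟩⟩

lemma diverge_ranges {R : Regex α} {b : ℕ} {u p' q' : List Bool} {Sp Sq : Regex α} {cp cq : ℕ}
    (hsp : R.sub? (u ++ false :: p') = some Sp) (hbp : baseAt R b (u ++ false :: p') = some cp)
    (hsq : R.sub? (u ++ true :: q') = some Sq) (hbq : baseAt R b (u ++ true :: q') = some cq) :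
    cp + 2 * Sp.size ≤ cq := by
  obtain ⟨Su, hsu⟩ := sub?_append_isSome hsp
  obtain ⟨cu, hbu⟩ := baseAt_isSome hsu b
  obtain ⟨e1, e2⟩ := sub?_baseAt_append hsu hbu (false :: p')
  obtain ⟨e3, e4⟩ := sub?_baseAt_append hsu hbu (true :: q')
  rw [hsp] at e1; rw [hbp] at e2; rw [hsq] at e3; rw [hbq] at e4
  cases Su with
  | char a => simp [Regex.sub?] at e1
  | star S => simp [Regex.sub?] at e3
  | cat S T =>
    simp only [Regex.sub?, baseAt] at e1 e2 e3 e4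
    obtain ⟨_, hp2, _⟩ := baseAt_range e1.symm e2.symm
    obtain ⟨hq1, _, _⟩ := baseAt_range e3.symm e4.symm
    omega
  | alt S T =>
    simp only [Regex.sub?, baseAt] at e1 e2 e3 e4
    obtain ⟨_, hp2, _⟩ := baseAt_range e1.symm e2.symm
    obtain ⟨hq1, _, _⟩ := baseAt_range e3.symm e4.symm
    omega

lemma base_apart {R : Regex α} {p q : List Bool} {Sp Sq : Regex α} {cp cq : ℕ}
    (hsp : R.sub? p = some Sp) (hbp : baseAt R 0 p = some cp)
    (hsq : R.sub? q = some Sq) (hbq : baseAt R 0 q = some cq)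
    (hne : p ≠ q) : cp + 2 ≤ cq ∨ cq + 2 ≤ cp := by
  by_cases h1 : p <+: q
  · obtain ⟨v, rfl⟩ := h1
    have hv : v ≠ [] := by rintro rfl; simp at hne
    obtain ⟨e1, e2⟩ := sub?_baseAt_append hsp hbp v
    rw [hsq] at e1; rw [hbq] at e2
    obtain ⟨_, _, h3⟩ := baseAt_range e1.symm e2.symm
    exact Or.inl (h3 hv)
  by_cases h2 : q <+: p
  · obtain ⟨v, rfl⟩ := h2
    have hv : v ≠ [] := by rintro rfl; simp at hne
    obtain ⟨e1, e2⟩ := sub?_baseAt_append hsq hbq v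
    rw [hsp] at e1; rw [hbp] at e2
    obtain ⟨_, _, h3⟩ := baseAt_range e1.symm e2.symm
    exact Or.inr (h3 hv)
  obtain ⟨u, p', q', h⟩ := diverge h1 h2
  rcases h with ⟨rfl, rfl⟩ | ⟨rfl, rfl⟩
  · have := diverge_ranges hsp hbp hsq hbq
    have := Sp.size_pos; omega
  · have := diverge_ranges hsq hbq hsp hbp
    have := Sq.size_pos; omega

end Aux2
theorem tst2 : True := trivial
section Aux3
variable {α : Type} [DecidableEq α]

lemma trans_range {R : Regex α} {b s t : ℕ} {l : Option α}
    (h : (s, l, t) ∈ (thompson R b).trans) :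
    b ≤ s ∧ s < b + 2 * R.size ∧ b ≤ t ∧ t < b + 2 * R.size := by
  induction R generalizing b s t l with
  | char a =>
    simp [thompson, Prod.ext_iff] at h
    simp [Regex.size]; omega
  | cat S T ihS ihT =>
    have hS := S.size_pos; have hT := T.size_pos
    simp only [thompson, Finset.mem_union, Finset.mem_insert, Finset.mem_singleton,
      thompson_start, thompson_accept, Prod.mk.injEq] at h
    simp only [Regex.size]
    rcases h with ((⟨rfl, -, rfl⟩ | ⟨rfl, -, rfl⟩ | ⟨rfl, -, rfl⟩) | hA) | hB
    · omega
    · omega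
    · omega
    · obtain ⟨u1, u2, u3, u4⟩ := ihS hA; omega
    · obtain ⟨u1, u2, u3, u4⟩ := ihT hB; omega
  | alt S T ihS ihT =>
    have hS := S.size_pos; have hT := T.size_pos
    simp only [thompson, Finset.mem_union, Finset.mem_insert, Finset.mem_singleton,
      thompson_start, thompson_accept, Prod.mk.injEq] at h
    simp only [Regex.size]
    rcases h with ((⟨rfl, -, rfl⟩ | ⟨rfl, -, rfl⟩ | ⟨rfl, -, rfl⟩ | ⟨rfl, -, rfl⟩) | hA) | hB
    · omega
    · omega
    · omega
    · omega
    · obtain ⟨u1, u2, u3, u4⟩ := ihS hA; omega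
    · obtain ⟨u1, u2, u3, u4⟩ := ihT hB; omega
  | star S ihS =>
    have hS := S.size_pos
    simp only [thompson, Finset.mem_union, Finset.mem_insert, Finset.mem_singleton,
      thompson_start, thompson_accept, Prod.mk.injEq] at h
    simp only [Regex.size]
    rcases h with (⟨rfl, -, rfl⟩ | ⟨rfl, -, rfl⟩ | ⟨rfl, -, rfl⟩ | ⟨rfl, -, rfl⟩) | hA
    · omega
    · omega
    · omega
    · omega
    · obtain ⟨u1, u2, u3, u4⟩ := ihS hA; omega

lemma trans_boundary {p : List Bool} {R S : Regex α} {b c s t : ℕ} {l : Option α}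
    (he : Even b)
    (h : (s, l, t) ∈ (thompson R b).trans)
    (hs : R.sub? p = some S) (hb : baseAt R b p = some c) :
    ((c ≤ s ∧ s < c + 2 * S.size) → ¬(c ≤ t ∧ t < c + 2 * S.size) → s = c + 1) ∧
    ((c ≤ t ∧ t < c + 2 * S.size) → ¬(c ≤ s ∧ s < c + 2 * S.size) → t = c) := by
  induction p generalizing R b s t l he with
  | nil =>
    have e1 : some R = some S := by rw [← hs]; cases R <;> rfl
    have e2 : some b = some c := by rw [← hb]; cases R <;> rfl
    cases e1; cases e2
    obtain ⟨u1, u2, u3, u4⟩ := trans_range h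
    exact ⟨fun h1 h2 => by omega, fun h1 h2 => by omega⟩
  | cons x p ih =>
    obtain ⟨k, hk⟩ := he
    cases R with
    | char a => simp [Regex.sub?] at hs
    | cat S' T =>
      have hS' := S'.size_pos; have hT := T.size_pos; have hSz := S.size_pos
      simp only [thompson, Finset.mem_union, Finset.mem_insert, Finset.mem_singleton,
        thompson_start, thompson_accept, Prod.mk.injEq] at h
      cases x with
      | false =>
        simp only [Regex.sub?] at hs
        simp only [baseAt] at hb
        obtain ⟨hr1, hr2, -⟩ := baseAt_range hs hb
        obtain ⟨j, hj⟩ := baseAt_even hb ⟨k + 1, by omega⟩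
        rcases h with ((⟨rfl, -, rfl⟩ | ⟨rfl, -, rfl⟩ | ⟨rfl, -, rfl⟩) | hA) | hB
        · exact ⟨fun h1 h2 => by omega, fun h1 h2 => by omega⟩
        · exact ⟨fun h1 h2 => by omega, fun h1 h2 => by omega⟩
        · exact ⟨fun h1 h2 => by omega, fun h1 h2 => by omega⟩
        · exact ih ⟨k + 1, by omega⟩ hA hs hb
        · obtain ⟨u1, u2, u3, u4⟩ := trans_range hB
          exact ⟨fun h1 h2 => by omega, fun h1 h2 => by omega⟩
      | true =>
        simp only [Regex.sub?] at hs
        simp only [baseAt] at hb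
        obtain ⟨hr1, hr2, -⟩ := baseAt_range hs hb
        obtain ⟨j, hj⟩ := baseAt_even hb ⟨k + 1 + S'.size, by omega⟩
        rcases h with ((⟨rfl, -, rfl⟩ | ⟨rfl, -, rfl⟩ | ⟨rfl, -, rfl⟩) | hA) | hB
        · exact ⟨fun h1 h2 => by omega, fun h1 h2 => by omega⟩
        · exact ⟨fun h1 h2 => by omega, fun h1 h2 => by omega⟩
        · exact ⟨fun h1 h2 => by omega, fun h1 h2 => by omega⟩
        · obtain ⟨u1, u2, u3, u4⟩ := trans_range hA
          exact ⟨fun h1 h2 => by omega, fun h1 h2 => by omega⟩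
        · exact ih ⟨k + 1 + S'.size, by omega⟩ hB hs hb
    | alt S' T =>
      have hS' := S'.size_pos; have hT := T.size_pos; have hSz := S.size_pos
      simp only [thompson, Finset.mem_union, Finset.mem_insert, Finset.mem_singleton,
        thompson_start, thompson_accept, Prod.mk.injEq] at h
      cases x with
      | false =>
        simp only [Regex.sub?] at hs
        simp only [baseAt] at hb
        obtain ⟨hr1, hr2, -⟩ := baseAt_range hs hb
        obtain ⟨j, hj⟩ := baseAt_even hb ⟨k + 1, by omega⟩
        rcases h with ((⟨rfl, -, rfl⟩ | ⟨rfl, -, rfl⟩ | ⟨rfl, -, rfl⟩ | ⟨rfl, -, rfl⟩) | hA) | hB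
        · exact ⟨fun h1 h2 => by omega, fun h1 h2 => by omega⟩
        · exact ⟨fun h1 h2 => by omega, fun h1 h2 => by omega⟩
        · exact ⟨fun h1 h2 => by omega, fun h1 h2 => by omega⟩
        · exact ⟨fun h1 h2 => by omega, fun h1 h2 => by omega⟩
        · exact ih ⟨k + 1, by omega⟩ hA hs hb
        · obtain ⟨u1, u2, u3, u4⟩ := trans_range hB
          exact ⟨fun h1 h2 => by omega, fun h1 h2 => by omega⟩
      | true =>
        simp only [Regex.sub?] at hs
        simp only [baseAt] at hb
        obtain ⟨hr1, hr2, -⟩ := baseAt_range hs hb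
        obtain ⟨j, hj⟩ := baseAt_even hb ⟨k + 1 + S'.size, by omega⟩
        rcases h with ((⟨rfl, -, rfl⟩ | ⟨rfl, -, rfl⟩ | ⟨rfl, -, rfl⟩ | ⟨rfl, -, rfl⟩) | hA) | hB
        · exact ⟨fun h1 h2 => by omega, fun h1 h2 => by omega⟩
        · exact ⟨fun h1 h2 => by omega, fun h1 h2 => by omega⟩
        · exact ⟨fun h1 h2 => by omega, fun h1 h2 => by omega⟩
        · exact ⟨fun h1 h2 => by omega, fun h1 h2 => by omega⟩
        · obtain ⟨u1, u2, u3, u4⟩ := trans_range hA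
          exact ⟨fun h1 h2 => by omega, fun h1 h2 => by omega⟩
        · exact ih ⟨k + 1 + S'.size, by omega⟩ hB hs hb
    | star S' =>
      have hS' := S'.size_pos; have hSz := S.size_pos
      simp only [thompson, Finset.mem_union, Finset.mem_insert, Finset.mem_singleton,
        thompson_start, thompson_accept, Prod.mk.injEq] at h
      cases x with
      | false =>
        simp only [Regex.sub?] at hs
        simp only [baseAt] at hb
        obtain ⟨hr1, hr2, -⟩ := baseAt_range hs hb
        obtain ⟨j, hj⟩ := baseAt_even hb ⟨k + 1, by omega⟩
        rcases h with (⟨rfl, -, rfl⟩ | ⟨rfl, -, rfl⟩ | ⟨rfl, -, rfl⟩ | ⟨rfl, -, rfl⟩) | hA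
        · exact ⟨fun h1 h2 => by omega, fun h1 h2 => by omega⟩
        · exact ⟨fun h1 h2 => by omega, fun h1 h2 => by omega⟩
        · exact ⟨fun h1 h2 => by omega, fun h1 h2 => by omega⟩
        · exact ⟨fun h1 h2 => by omega, fun h1 h2 => by omega⟩
        · exact ih ⟨k + 1, by omega⟩ hA hs hb
      | true => simp [Regex.sub?] at hs

end Aux3
theorem tst3 : True := trivial
section Aux4
variable {α : Type} [DecidableEq α]

lemma statesOf_card {R : Regex α} {C : Finset (List Bool)}
    (h : ∀ p ∈ C, (R.sub? p).isSome) : (statesOf R C).card = 2 * C.card := by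
  have hdisj : ∀ p ∈ C, ∀ q ∈ C, p ≠ q → Disjoint
      ({(baseAt R 0 p).getD 0, (baseAt R 0 p).getD 0 + 1} : Finset ℕ)
      ({(baseAt R 0 q).getD 0, (baseAt R 0 q).getD 0 + 1} : Finset ℕ) := by
    intro p hp q hq hne
    obtain ⟨Sp, hsp⟩ := Option.isSome_iff_exists.mp (h p hp)
    obtain ⟨Sq, hsq⟩ := Option.isSome_iff_exists.mp (h q hq)
    obtain ⟨cp, hbp⟩ := baseAt_isSome hsp 0
    obtain ⟨cq, hbq⟩ := baseAt_isSome hsq 0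
    have := base_apart hsp hbp hsq hbq hne
    rw [hbp, hbq]
    rw [Finset.disjoint_left]
    intro x hx hx'
    simp at hx hx'
    omega
  rw [statesOf, Finset.card_biUnion hdisj]
  have h2 : ∀ p ∈ C, ({(baseAt R 0 p).getD 0, (baseAt R 0 p).getD 0 + 1} : Finset ℕ).card = 2 := by
    intro p hp
    rw [Finset.card_insert_of_notMem (by simp), Finset.card_singleton]
  rw [Finset.sum_congr rfl h2, Finset.sum_const, smul_eq_mul, mul_comm]

lemma subtree_le (C : Finset (List Bool)) (v : List Bool) :
    (C.filter (fun p => v <+: p)).card ≤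
      1 + (C.filter (fun p => (v ++ [false]) <+: p)).card +
        (C.filter (fun p => (v ++ [true]) <+: p)).card := by
  have hsub : C.filter (fun p => v <+: p) ⊆
      insert v ((C.filter (fun p => (v ++ [false]) <+: p)) ∪
        (C.filter (fun p => (v ++ [true]) <+: p))) := by
    intro p hp
    rw [Finset.mem_filter] at hp
    obtain ⟨w, rfl⟩ := hp.2
    cases w with
    | nil => simp
    | cons b w =>
      rw [Finset.mem_insert, Finset.mem_union, Finset.mem_filter, Finset.mem_filter]
      cases b
      · exact Or.inr (Or.inl ⟨hp.1, w, by simp⟩)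
      · exact Or.inr (Or.inr ⟨hp.1, w, by simp⟩)
  have h1 := Finset.card_le_card hsub
  have h2 := Finset.card_insert_le v ((C.filter (fun p => (v ++ [false]) <+: p)) ∪
    (C.filter (fun p => (v ++ [true]) <+: p)))
  have h3 := Finset.card_union_le (C.filter (fun p => (v ++ [false]) <+: p))
    (C.filter (fun p => (v ++ [true]) <+: p))
  omega

lemma subtree_lt {C : Finset (List Bool)} {v : List Bool} (hv : v ∈ C) (b : Bool) :
    (C.filter (fun p => (v ++ [b]) <+: p)).card < (C.filter (fun p => v <+: p)).card := by
  have hsub : C.filter (fun p => (v ++ [b]) <+: p) ⊆ (C.filter (fun p => v <+: p)).erase v := by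
    intro p hp
    rw [Finset.mem_filter] at hp
    rw [Finset.mem_erase, Finset.mem_filter]
    refine ⟨?_, hp.1, (List.prefix_append v [b]).trans hp.2⟩
    intro hEq
    have := hp.2.length_le
    simp [hEq] at this
  have h1 := Finset.card_le_card hsub
  have h2 : v ∈ C.filter (fun p => v <+: p) := Finset.mem_filter.mpr ⟨hv, List.prefix_rfl⟩
  have h3 := Finset.card_erase_of_mem h2
  have h4 := Finset.card_pos.mpr ⟨v, h2⟩
  omega

lemma child_mem {C : Finset (List Bool)} {r : List Bool}
    (hr : ∀ p ∈ C, r <+: p ∧ ∀ q, r <+: q → q <+: p → q ∈ C)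
    {v : List Bool} (hv : v ∈ C) {b : Bool}
    (h : 0 < (C.filter (fun p => (v ++ [b]) <+: p)).card) : v ++ [b] ∈ C := by
  obtain ⟨p, hp⟩ := Finset.card_pos.mp h
  rw [Finset.mem_filter] at hp
  exact (hr p hp.1).2 _ ((hr v hv).1.trans (List.prefix_append v [b])) hp.2

lemma descent {C : Finset (List Bool)} {r : List Bool}
    (hr : ∀ p ∈ C, r <+: p ∧ ∀ q, r <+: q → q <+: p → q ∈ C)
    (hn : 2 ≤ C.card) :
    ∀ k, ∀ v ∈ C, (C.filter (fun p => v <+: p)).card ≤ k →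
      2 * C.card < 3 * (C.filter (fun p => v <+: p)).card →
      ∃ w ∈ C, v <+: w ∧ w ≠ v ∧ C.card ≤ 3 * (C.filter (fun p => w <+: p)).card + 3 ∧
        3 * (C.filter (fun p => w <+: p)).card ≤ 2 * C.card := by
  intro k
  induction k with
  | zero => intro v hv hk h; omega
  | succ k ih =>
    intro v hv hk h
    by_cases h0 : 2 * C.card < 3 * (C.filter (fun p => (v ++ [false]) <+: p)).card
    · have hm : v ++ [false] ∈ C := child_mem hr hv (by omega)
      have hlt := subtree_lt hv false
      obtain ⟨w, hw1, hw2, hw3, hw4, hw5⟩ := ih (v ++ [false]) hm (by omega) h0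
      refine ⟨w, hw1, (List.prefix_append v [false]).trans hw2, ?_, hw4, hw5⟩
      rintro rfl
      have := hw2.length_le
      simp at this
    by_cases h1 : 2 * C.card < 3 * (C.filter (fun p => (v ++ [true]) <+: p)).card
    · have hm : v ++ [true] ∈ C := child_mem hr hv (by omega)
      have hlt := subtree_lt hv true
      obtain ⟨w, hw1, hw2, hw3, hw4, hw5⟩ := ih (v ++ [true]) hm (by omega) h1
      refine ⟨w, hw1, (List.prefix_append v [true]).trans hw2, ?_, hw4, hw5⟩
      rintro rfl
      have := hw2.length_le
      simp at this
    · have hle := subtree_le C v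
      by_cases hcmp : (C.filter (fun p => (v ++ [true]) <+: p)).card ≤
          (C.filter (fun p => (v ++ [false]) <+: p)).card
      · refine ⟨v ++ [false], child_mem hr hv (by omega), List.prefix_append v [false],
          ?_, by omega, by omega⟩
        intro hEq
        have : (v ++ [false]).length = v.length := by rw [hEq]
        simp at this
      · refine ⟨v ++ [true], child_mem hr hv (by omega), List.prefix_append v [true],
          ?_, by omega, by omega⟩
        intro hEq
        have : (v ++ [true]).length = v.length := by rw [hEq]
        simp at this

end Aux4
theorem tst4 : True := trivial

/-- a pTNFA `P` (induced by a cluster `C`) with more than `2`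
states splits into an outer pTNFA `P_O` (containing the start and accepting
states of `P`, i.e. the root of `C`) and an inner pTNFA `P_I`, each with at most
`(2/3)m + 2` states, such that transitions from `P_O` to `P_I` end in `θ_{P_I}`
and transitions from `P_I` to `P_O` start in `φ_{P_I}`. -/
theorem pTNFA_balanced_partition (R : Regex α) (C : Finset (List Bool))
    (hC : IsCluster R C) (hm : 2 < (statesOf R C).card) :
    ∃ (CO CI : Finset (List Bool)) (rI : List Bool),
      Disjoint CO CI ∧ CO ∪ CI = C ∧
      IsCluster R CO ∧ IsCluster R CI ∧
      (∃ r ∈ CO, ∀ p ∈ C, r <+: p) ∧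
      rI ∈ CI ∧ (∀ p ∈ CI, rI <+: p) ∧
      3 * (statesOf R CO).card ≤ 2 * (statesOf R C).card + 6 ∧
      3 * (statesOf R CI).card ≤ 2 * (statesOf R C).card + 6 ∧
      (∀ (s : ℕ) (l : Option α) (t : ℕ), (s, l, t) ∈ (thompson R 0).trans →
        s ∈ statesOf R CO → t ∈ statesOf R CI → t = (baseAt R 0 rI).getD 0) ∧
      (∀ (s : ℕ) (l : Option α) (t : ℕ), (s, l, t) ∈ (thompson R 0).trans →
        s ∈ statesOf R CI → t ∈ statesOf R CO → s = (baseAt R 0 rI).getD 0 + 1) := by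
  obtain ⟨hne, hvalid, r, hrC, hroot⟩ := hC
  have hcard : (statesOf R C).card = 2 * C.card := statesOf_card hvalid
  have hn2 : 2 ≤ C.card := by omega
  have hrfull : C.filter (fun p => r <+: p) = C :=
    Finset.filter_true_of_mem (fun p hp => (hroot p hp).1)
  obtain ⟨rI, hrIC, hrpre, hrIne, hlow, hhigh⟩ :=
    descent hroot hn2 C.card r hrC (by rw [hrfull]) (by rw [hrfull]; omega)
  set CI := C.filter (fun p => rI <+: p) with hCI
  set CO := C \ CI with hCO
  have hCIsub : CI ⊆ C := Finset.filter_subset _ _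
  have hCOsub : CO ⊆ C := Finset.sdiff_subset
  have hrO : r ∈ CO := by
    rw [hCO, Finset.mem_sdiff]
    refine ⟨hrC, ?_⟩
    rw [hCI, Finset.mem_filter]
    rintro ⟨-, hpre⟩
    exact hrIne (hpre.eq_of_length (le_antisymm hpre.length_le hrpre.length_le))
  have hrICI : rI ∈ CI := by rw [hCI, Finset.mem_filter]; exact ⟨hrIC, List.prefix_rfl⟩
  have hCIpre : ∀ p ∈ CI, rI <+: p := by
    intro p hp; rw [hCI, Finset.mem_filter] at hp; exact hp.2
  obtain ⟨SrI, hsrI⟩ := Option.isSome_iff_exists.mp (hvalid rI hrIC)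
  obtain ⟨crI, hbrI⟩ := baseAt_isSome hsrI 0
  have hszrI := SrI.size_pos
  have hIn : ∀ x ∈ statesOf R CI, crI ≤ x ∧ x < crI + 2 * SrI.size := by
    intro x hx
    rw [statesOf, Finset.mem_biUnion] at hx
    obtain ⟨p, hp, hxp⟩ := hx
    rw [hCI, Finset.mem_filter] at hp
    obtain ⟨Sp, hsp⟩ := Option.isSome_iff_exists.mp (hvalid p hp.1)
    obtain ⟨cp, hbp⟩ := baseAt_isSome hsp 0
    obtain ⟨v, rfl⟩ := hp.2
    obtain ⟨e1, e2⟩ := sub?_baseAt_append hsrI hbrI v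
    rw [hsp] at e1; rw [hbp] at e2
    obtain ⟨g1, g2, -⟩ := baseAt_range e1.symm e2.symm
    have hps := Sp.size_pos
    rw [hbp] at hxp; simp at hxp
    rcases hxp with rfl | rfl <;> omega
  have hOut : ∀ x ∈ statesOf R CO, ¬(crI ≤ x ∧ x < crI + 2 * SrI.size) := by
    intro x hx
    rw [statesOf, Finset.mem_biUnion] at hx
    obtain ⟨q, hq, hxq⟩ := hx
    rw [hCO, Finset.mem_sdiff] at hq
    have hqC : q ∈ C := hq.1
    have hnpre : ¬ rI <+: q := by
      intro h; exact hq.2 (by rw [hCI, Finset.mem_filter]; exact ⟨hqC, h⟩)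
    obtain ⟨Sq, hsq⟩ := Option.isSome_iff_exists.mp (hvalid q hqC)
    obtain ⟨cq, hbq⟩ := baseAt_isSome hsq 0
    have hqsz := Sq.size_pos
    rw [hbq] at hxq; simp at hxq
    by_cases hq2 : q <+: rI
    · obtain ⟨v, rfl⟩ := hq2
      have hv : v ≠ [] := by rintro rfl; exact hnpre (by simp)
      obtain ⟨e1, e2⟩ := sub?_baseAt_append hsq hbq v
      rw [hsrI] at e1; rw [hbrI] at e2
      obtain ⟨-, -, g3⟩ := baseAt_range e1.symm e2.symm
      have hg := g3 hv
      rcases hxq with rfl | rfl <;> omega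
    · obtain ⟨u, p', q', hd⟩ := diverge hq2 hnpre
      rcases hd with ⟨rfl, hrIeq⟩ | ⟨rfl, hrIeq⟩ <;> subst hrIeq
      · have hsep := diverge_ranges hsq hbq hsrI hbrI
        rcases hxq with rfl | rfl <;> omega
      · have hsep := diverge_ranges hsrI hbrI hsq hbq
        rcases hxq with rfl | rfl <;> omega
  have hCIcard : (statesOf R CI).card = 2 * CI.card :=
    statesOf_card (fun p hp => hvalid p (hCIsub hp))
  have hCOcard : (statesOf R CO).card = 2 * CO.card :=
    statesOf_card (fun p hp => hvalid p (hCOsub hp))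
  have hCOc : CO.card = C.card - CI.card := Finset.card_sdiff_of_subset hCIsub
  have hCIle : CI.card ≤ C.card := Finset.card_le_card hCIsub
  refine ⟨CO, CI, rI, Finset.sdiff_disjoint, Finset.sdiff_union_of_subset hCIsub, ?_, ?_, ?_,
    hrICI, hCIpre, by omega, by omega, ?_, ?_⟩
  · refine ⟨⟨r, hrO⟩, fun p hp => hvalid p (hCOsub hp), r, hrO, fun p hp => ?_⟩
    refine ⟨(hroot p (hCOsub hp)).1, fun q hq1 hq2 => ?_⟩
    rw [hCO, Finset.mem_sdiff]
    refine ⟨(hroot p (hCOsub hp)).2 q hq1 hq2, fun hqCI => ?_⟩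
    have : p ∈ CI := by
      rw [hCI, Finset.mem_filter]
      exact ⟨hCOsub hp, (hCIpre q hqCI).trans hq2⟩
    rw [hCO, Finset.mem_sdiff] at hp
    exact hp.2 this
  · refine ⟨⟨rI, hrICI⟩, fun p hp => hvalid p (hCIsub hp), rI, hrICI, fun p hp => ?_⟩
    refine ⟨hCIpre p hp, fun q hq1 hq2 => ?_⟩
    rw [hCI, Finset.mem_filter]
    exact ⟨(hroot p (hCIsub hp)).2 q (((hroot rI hrIC).1).trans hq1) hq2, hq1⟩
  · exact ⟨r, hrO, fun p hp => (hroot p hp).1⟩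
  · intro s l t ht hsO htI
    have hb := trans_boundary (by exact Even.zero) ht hsrI hbrI
    rw [hbrI, Option.getD_some]
    exact hb.2 (hIn t htI) (hOut s hsO)
  · intro s l t ht hsI htO
    have hb := trans_boundary (by exact Even.zero) ht hsrI hbrI
    rw [hbrI, Option.getD_some]
    exact hb.1 (hIn s hsI) (hOut t htO)
end

section
/- The recursive closure algorithm on a separator tree is correct: for any node v of the separator tree of a pTNFA P and any state set S of P(v), the procedure Close_{P(v)}(S) — which computes the subset Z of X(v) ε-reachable from S in P(v), then (if v is internal with children u, w) computes the set G of states of P(v) ε-reachable from Z and returns Close_{P(u)}((S ∪ G) ∩ V(P(u))) ∪ Close_{P(w)}((S ∪ G) ∩ V(P(w))), and at a leaf returns Z — returns exactly the set of states of P(v) reachable from S via a path of ε-transitions in P(v). -/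
variable {σ : Type}

/-- A separator tree for a pTNFA: a leaf is a 2-state pTNFA `{θ, φ}`; an internal
node corresponds to the pTNFA whose states are those of its outer child and its
inner child, and stores `X(v) = {θ_{P_I}, φ_{P_I}}`, the start/accept pair of the
inner child. -/
inductive STree (σ : Type) where
  | leaf : σ → σ → STree σ
  | node : STree σ → STree σ → STree σ  -- outer child, inner child

namespace STree

/-- state set `V(P(v))`. -/
def V : STree σ → Set σ
  | leaf θ φ => {θ, φ}
  | node o i => o.V ∪ i.V

/-- start state of the pTNFA. -/
def start : STree σ → σ
  | leaf θ _ => θ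
  | node o _ => o.start

/-- accepting state of the pTNFA. -/
def accept : STree σ → σ
  | leaf _ φ => φ
  | node o _ => o.accept

end STree

/-- states of `A` that are ε-reachable (w.r.t. ε-edge relation `E`) from `S`
inside `A`. -/
def reachIn (E : σ → σ → Prop) (A : Set σ) (S : Set σ) : Set σ :=
  {t | t ∈ A ∧ ∃ s ∈ S, s ∈ A ∧
    Relation.ReflTransGen (fun a b => E a b ∧ a ∈ A ∧ b ∈ A) s t}

/-- The recursive closure procedure `Close_{P(v)}(S)`: compute the subset `Z` of
`X(v)` ε-reachable from `S`; at a leaf return `Z`; at an internal node compute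
the set `G` of states of `P(v)` ε-reachable from `Z` and recurse on the two
children with `(S ∪ G)` restricted to their state sets. -/
def closeProc (E : σ → σ → Prop) : STree σ → Set σ → Set σ
  | .leaf θ φ, S => reachIn E {θ, φ} S
  | .node o i, S =>
      let Z := reachIn E (o.V ∪ i.V) S ∩ {i.start, i.accept}
      let G := reachIn E (o.V ∪ i.V) Z
      closeProc E o ((S ∪ G) ∩ o.V) ∪ closeProc E i ((S ∪ G) ∩ i.V)

/-- the separator property at every node: the two children partition the states,
transitions from the outer part into the inner part end in `θ_{P_I}`, and
transitions from the inner part to the outer part start in `φ_{P_I}`. -/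
inductive SepValid (E : σ → σ → Prop) : STree σ → Prop where
  | leaf (θ φ : σ) : SepValid E (.leaf θ φ)
  | node {o i : STree σ} : SepValid E o → SepValid E i →
      Disjoint o.V i.V →
      (∀ a b, E a b → a ∈ o.V → b ∈ i.V → b = i.start) →
      (∀ a b, E a b → a ∈ i.V → b ∈ o.V → a = i.accept) →
      SepValid E (.node o i)

lemma reachIn_subset (E : σ → σ → Prop) (A S : Set σ) : reachIn E A S ⊆ A :=
  fun _ h => h.1

lemma subset_reachIn (E : σ → σ → Prop) {A S : Set σ} (h : S ⊆ A) :
    S ⊆ reachIn E A S :=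
  fun s hs => ⟨h hs, s, hs, h hs, Relation.ReflTransGen.refl⟩

lemma reachIn_mono (E : σ → σ → Prop) {A S T : Set σ} (h : S ⊆ T) :
    reachIn E A S ⊆ reachIn E A T := by
  rintro t ⟨ht, s, hs, hsA, hp⟩
  exact ⟨ht, s, h hs, hsA, hp⟩

lemma reachIn_idem (E : σ → σ → Prop) {A S : Set σ} :
    reachIn E A (reachIn E A S) ⊆ reachIn E A S := by
  rintro t ⟨ht, m, ⟨hm, s, hs, hsA, hp1⟩, hmA, hp2⟩
  exact ⟨ht, s, hs, hsA, hp1.trans hp2⟩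

lemma reachIn_monoA (E : σ → σ → Prop) {A B S : Set σ} (h : A ⊆ B) :
    reachIn E A S ⊆ reachIn E B S := by
  rintro t ⟨ht, s, hs, hsA, hp⟩
  exact ⟨h ht, s, hs, h hsA, (by refine Relation.ReflTransGen.mono ?_ s t hp; intro a b hab; exact ⟨hab.1, h hab.2.1, h hab.2.2⟩)⟩

/-- the recursive closure algorithm on a separator tree is correct:
for every node of the separator tree and every state set `S` of its pTNFA,
`Close_{P(v)}(S)` is exactly the set of states of `P(v)` reachable from `S` via a
path of ε-transitions in `P(v)`. -/
theorem closeProc_correct (E : σ → σ → Prop) (B : STree σ) (h : SepValid E B)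
    (S : Set σ) (hS : S ⊆ B.V) :
    closeProc E B S = reachIn E B.V S := by
  induction h generalizing S with
  | leaf θ φ => rfl
  | @node o i ho hi hdis hoi hio iho ihi =>
    have hA : (STree.node o i).V = o.V ∪ i.V := rfl
    set A := o.V ∪ i.V with hAdef
    set Z := reachIn E A S ∩ {i.start, i.accept} with hZdef
    set G := reachIn E A Z with hGdef
    rw [hA] at hS ⊢
    have hZR : Z ⊆ reachIn E A S := Set.inter_subset_left
    have hGR : G ⊆ reachIn E A S :=
      fun x hx => reachIn_idem E (reachIn_mono E hZR hx)
    have hSR : S ⊆ reachIn E A S := subset_reachIn E hS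
    have hSGR : S ∪ G ⊆ reachIn E A S := Set.union_subset hSR hGR
    show closeProc E o ((S ∪ G) ∩ o.V) ∪ closeProc E i ((S ∪ G) ∩ i.V)
        = reachIn E A S
    rw [iho _ Set.inter_subset_right, ihi _ Set.inter_subset_right]
    apply Set.Subset.antisymm
    · rintro t (h1 | h1)
      · exact reachIn_idem E
          (reachIn_mono E (Set.inter_subset_left.trans hSGR)
            (reachIn_monoA E Set.subset_union_left h1))
      · exact reachIn_idem E
          (reachIn_mono E (Set.inter_subset_left.trans hSGR)
            (reachIn_monoA E Set.subset_union_right h1))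
    · rintro t ⟨htA, s, hsS, hsA, hp⟩
      clear hSGR hSR hGR hZR htA
      induction hp with
      | refl =>
        rcases hsA with hsO | hsI
        · exact Or.inl ⟨hsO, s, ⟨Or.inl hsS, hsO⟩, hsO, Relation.ReflTransGen.refl⟩
        · exact Or.inr ⟨hsI, s, ⟨Or.inl hsS, hsI⟩, hsI, Relation.ReflTransGen.refl⟩
      | @tail b c hsb hbc ih =>
        obtain ⟨hE, hbA, hcA⟩ := hbc
        have hbR : b ∈ reachIn E A S := ⟨hbA, s, hsS, hsA, hsb⟩
        rcases hcA with hcO | hcI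
        · rcases hbA with hbO | hbI
          · rcases ih with ⟨hbO', s', hs', hs'O, hpath⟩ | ⟨hbI, _⟩
            · exact Or.inl ⟨hcO, s', hs', hs'O, hpath.tail ⟨hE, hbO, hcO⟩⟩
            · exact absurd hbI (Set.disjoint_left.mp hdis hbO)
          · have hbacc : b = i.accept := hio b c hE hbI hcO
            have hbZ : b ∈ Z := ⟨hbR, Or.inr hbacc⟩
            have hcG : c ∈ G :=
              ⟨Or.inl hcO, b, hbZ, Or.inr hbI,
                Relation.ReflTransGen.single ⟨hE, Or.inr hbI, Or.inl hcO⟩⟩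
            exact Or.inl ⟨hcO, c, ⟨Or.inr hcG, hcO⟩, hcO, Relation.ReflTransGen.refl⟩
        · rcases hbA with hbO | hbI
          · have hcst : c = i.start := hoi b c hE hbO hcI
            have hcR : c ∈ reachIn E A S :=
              ⟨Or.inr hcI, s, hsS, hsA, hsb.tail ⟨hE, Or.inl hbO, Or.inr hcI⟩⟩
            have hcZ : c ∈ Z := ⟨hcR, Or.inl hcst⟩
            have hcG : c ∈ G := subset_reachIn E (fun x hx => hx.1.1) hcZ
            exact Or.inr ⟨hcI, c, ⟨Or.inr hcG, hcI⟩, hcI, Relation.ReflTransGen.refl⟩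
          · rcases ih with ⟨hbO, _⟩ | ⟨hbI', s', hs', hs'I, hpath⟩
            · exact absurd hbI (Set.disjoint_left.mp hdis hbO)
            · exact Or.inr ⟨hcI, s', hs', hs'I, hpath.tail ⟨hE, hbI, hcI⟩⟩
end

section
/- Bit-trick correctness for Move: let A be a TNFA with m states indexed 1..m by a topological order of the forward transitions in which the two endpoints of every α-transition (α ∈ Σ) are consecutive. Represent a state set by the bitstring S = s_1…s_m (s_i = 1 iff state i is in the set), and let D_α = d_1…d_m with d_i = 1 iff state i has incoming α-transitions. Then the bitstring (S >> 1) & D_α (right shift by one position toward higher indices, bitwise and) represents exactly Move(S, α), the set of states reachable from S by a single α-transition. -/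
/-- right shift by one position towards higher indices: bit `i` of the result is
bit `i−1` of `S` (and bit `0` is `0`). -/
def shift1 {m : ℕ} (S : Fin m → Bool) : Fin m → Bool := fun i =>
  if h : 0 < (i : ℕ) then
    S ⟨(i : ℕ) - 1, Nat.lt_of_le_of_lt (Nat.sub_le _ _) i.isLt⟩
  else false

/-- bit-trick correctness for `Move`.  Let the states of a TNFA be
indexed by a topological order in which the two endpoints of every `α`-transition
are consecutive (the transition goes from `i−1` to `i`).  If the bitstring `S`
represents a state set and `D_α` marks the `α`-states, then `(S >> 1) & D_α`
represents exactly `Move(S, α)`. -/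
theorem move_bit_trick {α : Type} (m : ℕ)
    (trans : Fin m → Option α → Fin m → Prop) (a : α)
    (hcons : ∀ (s t : Fin m) (b : α), trans s (some b) t → (t : ℕ) = (s : ℕ) + 1)
    (S D : Fin m → Bool)
    (hD : ∀ i : Fin m, D i = true ↔ ∃ s : Fin m, trans s (some a) i) :
    ∀ t : Fin m, (shift1 S t && D t) = true ↔
      ∃ s : Fin m, S s = true ∧ trans s (some a) t := by
  intro t
  rw [Bool.and_eq_true, hD]
  constructor
  · rintro ⟨hsh, s, hs⟩
    have hv := hcons s t a hs
    have hpos : 0 < (t : ℕ) := by omega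
    refine ⟨s, ?_, hs⟩
    unfold shift1 at hsh
    rw [dif_pos hpos] at hsh
    have : (⟨(t : ℕ) - 1, Nat.lt_of_le_of_lt (Nat.sub_le _ _) t.isLt⟩ : Fin m) = s := by
      apply Fin.ext; simp; omega
    rwa [this] at hsh
  · rintro ⟨s, hSs, hs⟩
    have hv := hcons s t a hs
    have hpos : 0 < (t : ℕ) := by omega
    refine ⟨?_, s, hs⟩
    unfold shift1
    rw [dif_pos hpos]
    have : (⟨(t : ℕ) - 1, Nat.lt_of_le_of_lt (Nat.sub_le _ _) t.isLt⟩ : Fin m) = s := by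
      apply Fin.ext; simp; omega
    rwa [this]
end

section
/- Bit-trick correctness for testing nonemptiness of m blocks in parallel: let Y be a bit string consisting of m blocks, each of the form 0 y_{i,1}…y_{i,m} (a test bit 0 followed by m data bits), and let I be the constant string (1 0^m)^m with a 1 at each test-bit position. Then Z = ((Y | I) − (I >> m)) & I is the string z_1 0^m z_2 0^m … z_m 0^m where z_i = 1 if and only if at least one of y_{i,1},…,y_{i,m} equals 1. -/
open Finset

private lemma bnbt_sum_lt (B n : ℕ) (f : ℕ → ℕ) (hf : ∀ j < n, f j < 2 ^ B) :
    (∑ j ∈ range n, f j * 2 ^ (j * B)) < 2 ^ (n * B) := by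
  induction n with
  | zero => simp
  | succ n ih =>
    rw [Finset.sum_range_succ]
    have h1 : (∑ j ∈ range n, f j * 2 ^ (j * B)) < 2 ^ (n * B) :=
      ih (fun j hj => hf j (Nat.lt_succ_of_lt hj))
    have h2 : f n * 2 ^ (n * B) ≤ (2 ^ B - 1) * 2 ^ (n * B) :=
      Nat.mul_le_mul_right _ (by have := hf n (Nat.lt_succ_self n); omega)
    have h3 : (2 : ℕ) ^ ((n + 1) * B) = 2 ^ B * 2 ^ (n * B) := by
      rw [Nat.succ_mul, pow_add, mul_comm]
    have h4 : (0 : ℕ) < 2 ^ B := pow_pos (by norm_num) _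
    have h5 : (0 : ℕ) < 2 ^ (n * B) := pow_pos (by norm_num) _
    calc (∑ j ∈ range n, f j * 2 ^ (j * B)) + f n * 2 ^ (n * B)
        < 2 ^ (n * B) + (2 ^ B - 1) * 2 ^ (n * B) := by omega
      _ = (1 + (2 ^ B - 1)) * 2 ^ (n * B) := by ring
      _ = 2 ^ B * 2 ^ (n * B) := by congr 1; omega
      _ = 2 ^ ((n + 1) * B) := h3.symm

private lemma bnbt_sum_testBit (B : ℕ) :
    ∀ (n : ℕ) (f : ℕ → ℕ), (∀ j < n, f j < 2 ^ B) → ∀ q r, q < n → r < B →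
    (∑ j ∈ range n, f j * 2 ^ (j * B)).testBit (q * B + r) = (f q).testBit r := by
  intro n
  induction n with
  | zero => intro f hf q r hq hr; exact absurd hq (Nat.not_lt_zero q)
  | succ n ih =>
    intro f hf q r hq hr
    have hsplit : (∑ j ∈ range (n + 1), f j * 2 ^ (j * B))
        = 2 ^ B * (∑ j ∈ range n, f (j + 1) * 2 ^ (j * B)) + f 0 := by
      rw [Finset.sum_range_succ', Finset.mul_sum]
      simp only [Nat.zero_mul, pow_zero, mul_one]
      congr 1
      refine Finset.sum_congr rfl (fun j _ => ?_)
      rw [Nat.succ_mul, pow_add]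
      ring
    rw [hsplit, Nat.testBit_two_pow_mul_add _ (hf 0 (Nat.succ_pos n))]
    cases q with
    | zero =>
      simp only [Nat.zero_mul, Nat.zero_add]
      rw [if_pos hr]
    | succ q =>
      have hge : ¬ ((q + 1) * B + r < B) := by
        simp only [Nat.succ_mul]; omega
      rw [if_neg hge]
      have harg : (q + 1) * B + r - B = q * B + r := by
        simp only [Nat.succ_mul]; omega
      rw [harg]
      exact ih (fun j => f (j + 1)) (fun j hj => hf (j + 1) (Nat.succ_lt_succ hj))
        q r (Nat.lt_of_succ_lt_succ hq) hr

private lemma bnbt_digit_expand (B : ℕ) (hB : 0 < B) :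
    ∀ (n : ℕ) (Y : ℕ), Y < 2 ^ (n * B) →
    Y = ∑ j ∈ range n, (Y / 2 ^ (j * B) % 2 ^ B) * 2 ^ (j * B) := by
  intro n
  induction n with
  | zero => intro Y hY; simpa using Nat.lt_one_iff.mp (by simpa using hY)
  | succ n ih =>
    intro Y hY
    have h4 : (0 : ℕ) < 2 ^ B := pow_pos (by norm_num) _
    have hY' : Y / 2 ^ B < 2 ^ (n * B) := by
      rw [Nat.div_lt_iff_lt_mul h4]
      calc Y < 2 ^ ((n + 1) * B) := hY
        _ = 2 ^ (n * B) * 2 ^ B := by rw [Nat.succ_mul, pow_add]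
    have hIH := ih (Y / 2 ^ B) hY'
    rw [Finset.sum_range_succ']
    simp only [Nat.zero_mul, pow_zero, Nat.div_one, mul_one]
    have hterm : ∀ j, (Y / 2 ^ ((j + 1) * B) % 2 ^ B) * 2 ^ ((j + 1) * B)
        = ((Y / 2 ^ B) / 2 ^ (j * B) % 2 ^ B) * 2 ^ (j * B) * 2 ^ B := by
      intro j
      have hd : Y / 2 ^ ((j + 1) * B) = (Y / 2 ^ B) / 2 ^ (j * B) := by
        rw [Nat.div_div_eq_div_mul, ← pow_add, Nat.succ_mul, Nat.add_comm]
      rw [hd, Nat.succ_mul, pow_add]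
      ring
    calc Y = 2 ^ B * (Y / 2 ^ B) + Y % 2 ^ B := (Nat.div_add_mod Y (2 ^ B)).symm
      _ = 2 ^ B * (∑ j ∈ range n, ((Y / 2 ^ B) / 2 ^ (j * B) % 2 ^ B) * 2 ^ (j * B))
            + Y % 2 ^ B := by rw [← hIH]
      _ = (∑ j ∈ range n, (Y / 2 ^ ((j + 1) * B) % 2 ^ B) * 2 ^ ((j + 1) * B))
            + Y % 2 ^ B := by
          congr 1
          rw [Finset.mul_sum]
          refine Finset.sum_congr rfl (fun j _ => ?_)
          rw [hterm j]; ring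

private lemma bnbt_top_iff (m x : ℕ) (hx : x < 2 ^ (m + 1)) :
    x.testBit m = true ↔ 2 ^ m ≤ x := by
  have h2 : (0 : ℕ) < 2 ^ m := pow_pos (by norm_num) _
  have hd : x / 2 ^ m < 2 := by
    rw [Nat.div_lt_iff_lt_mul h2]
    calc x < 2 ^ (m + 1) := hx
      _ = 2 * 2 ^ m := by rw [pow_succ]; ring
  have hdd : 2 ^ m ≤ x ↔ 1 ≤ x / 2 ^ m := by
    rw [Nat.le_div_iff_mul_le h2, one_mul]
  rw [Nat.testBit_eq_decide_div_mod_eq, decide_eq_true_iff]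
  generalize x / 2 ^ m = d at hd hdd
  omega

/-- bit-trick correctness for testing nonemptiness of `m` blocks in
parallel.  `Y` consists of `m` blocks, each a `0` test bit followed by `m` data
bits (block `j`, counted from the least significant end, occupies bits
`j(m+1), …, j(m+1)+m`, with test bit `j(m+1)+m`), `I` has a `1` at each test-bit
position.  Then `Z = ((Y | I) − (I >> m)) & I` has a `1` at the test bit of block
`j` iff some data bit of block `j` of `Y` is `1`, and `0`s everywhere else. -/
theorem block_nonempty_bit_trick (m : ℕ) (hm : 1 ≤ m) (Y : ℕ)
    (hY : Y < 2 ^ (m * (m + 1)))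
    (htest : ∀ j < m, Y.testBit (j * (m + 1) + m) = false) :
    (∀ j < m,
      ((((Y ||| (∑ i ∈ Finset.range m, 2 ^ (i * (m + 1) + m))) -
          ((∑ i ∈ Finset.range m, 2 ^ (i * (m + 1) + m)) >>> m)) &&&
          (∑ i ∈ Finset.range m, 2 ^ (i * (m + 1) + m))).testBit (j * (m + 1) + m)
        = true ↔ ∃ k < m, Y.testBit (j * (m + 1) + k) = true)) ∧
    (∀ p : ℕ, (∀ j < m, p ≠ j * (m + 1) + m) →
      ((((Y ||| (∑ i ∈ Finset.range m, 2 ^ (i * (m + 1) + m))) -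
          ((∑ i ∈ Finset.range m, 2 ^ (i * (m + 1) + m)) >>> m)) &&&
          (∑ i ∈ Finset.range m, 2 ^ (i * (m + 1) + m))).testBit p = false)) := by
  have hB : (0:ℕ) < m + 1 := Nat.succ_pos m
  have hpm : (0:ℕ) < 2 ^ m := pow_pos (by norm_num) _
  set I : ℕ := ∑ i ∈ Finset.range m, 2 ^ (i * (m + 1) + m) with hIdef
  have hIform : I = ∑ i ∈ range m, 2 ^ m * 2 ^ (i * (m + 1)) := by
    rw [hIdef]
    exact Finset.sum_congr rfl (fun i _ => by rw [pow_add]; ring)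
  set J : ℕ := ∑ i ∈ range m, 1 * 2 ^ (i * (m + 1)) with hJdef
  have hJ1 : (∑ i ∈ range m, 2 ^ (i * (m + 1))) = J := by
    rw [hJdef]; exact Finset.sum_congr rfl (fun i _ => by ring)
  have hshift : I >>> m = J := by
    rw [Nat.shiftRight_eq_div_pow, hIform, ← Finset.mul_sum, hJdef]
    rw [Nat.mul_div_cancel_left _ hpm]
    exact Finset.sum_congr rfl (fun i _ => by ring)
  -- digits of Y
  set g : ℕ → ℕ := fun j => Y / 2 ^ (j * (m + 1)) % 2 ^ (m + 1) with hgdef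
  have hgB : ∀ j, g j < 2 ^ (m + 1) := fun j =>
    Nat.mod_lt _ (pow_pos (by norm_num) _)
  have hYsum : Y = ∑ j ∈ range m, g j * 2 ^ (j * (m + 1)) :=
    bnbt_digit_expand (m + 1) hB m Y hY
  have hgbit : ∀ j k, k < m + 1 → (g j).testBit k = Y.testBit (j * (m + 1) + k) := by
    intro j k hk
    rw [hgdef]
    simp only
    rw [Nat.testBit_mod_two_pow, decide_eq_true hk, Bool.true_and,
      ← Nat.shiftRight_eq_div_pow, Nat.testBit_shiftRight]
  have hg : ∀ j < m, g j < 2 ^ m := by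
    intro j hj
    by_contra hcon
    push_neg at hcon
    have := (bnbt_top_iff m (g j) (hgB j)).mpr hcon
    rw [hgbit j m (Nat.lt_succ_self m)] at this
    rw [htest j hj] at this
    exact Bool.false_ne_true this
  have hgne : ∀ j < m, (g j ≠ 0 ↔ ∃ k < m, Y.testBit (j * (m + 1) + k) = true) := by
    intro j hj
    constructor
    · intro hne
      obtain ⟨i, hi⟩ := Nat.exists_testBit_of_ne_zero hne
      have him : i < m := by
        by_contra hcon
        push_neg at hcon
        have : g j < 2 ^ i :=
          lt_of_lt_of_le (hg j hj) (Nat.pow_le_pow_right (by norm_num) hcon)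
        rw [Nat.testBit_lt_two_pow this] at hi
        exact Bool.false_ne_true hi
      exact ⟨i, him, by rw [← hgbit j i (Nat.lt_succ_of_lt him)]; exact hi⟩
    · rintro ⟨k, hk, hbit⟩
      intro h0
      rw [← hgbit j k (Nat.lt_succ_of_lt hk), h0, Nat.zero_testBit] at hbit
      exact Bool.false_ne_true hbit
  -- Y ||| I = sum of (g j + 2^m) blocks
  have hS2lt : (∑ j ∈ range m, (g j + 2 ^ m) * 2 ^ (j * (m + 1))) < 2 ^ (m * (m + 1)) := by
    refine bnbt_sum_lt (m + 1) m _ (fun j hj => ?_)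
    have := hg j hj
    have : g j + 2 ^ m < 2 ^ m + 2 ^ m := by omega
    calc g j + 2 ^ m < 2 ^ m + 2 ^ m := this
      _ = 2 ^ (m + 1) := by rw [pow_succ]; ring
  have hIlt : I < 2 ^ (m * (m + 1)) := by
    rw [hIform]
    refine bnbt_sum_lt (m + 1) m _ (fun j hj => ?_)
    calc (2:ℕ) ^ m < 2 ^ m + 2 ^ m := by omega
      _ = 2 ^ (m + 1) := by rw [pow_succ]; ring
  have hcoef2 : ∀ j < m, g j + 2 ^ m < 2 ^ (m + 1) := by
    intro j hj
    have := hg j hj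
    calc g j + 2 ^ m < 2 ^ m + 2 ^ m := by omega
      _ = 2 ^ (m + 1) := by rw [pow_succ]; ring
  have hYI : Y ||| I = ∑ j ∈ range m, (g j + 2 ^ m) * 2 ^ (j * (m + 1)) := by
    apply Nat.eq_of_testBit_eq
    intro p
    rw [Nat.testBit_lor]
    by_cases hp : p < m * (m + 1)
    · obtain ⟨q, r, hrB, hpqr⟩ : ∃ q r, r < m + 1 ∧ p = q * (m + 1) + r :=
        ⟨p / (m + 1), p % (m + 1), Nat.mod_lt _ hB, by
          rw [mul_comm]; exact (Nat.div_add_mod p (m + 1)).symm⟩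
      have hqm : q < m := by
        by_contra hcon
        push_neg at hcon
        have := Nat.mul_le_mul_right (m + 1) hcon
        omega
      rw [hpqr]
      rw [show Y.testBit (q * (m + 1) + r)
          = (∑ j ∈ range m, g j * 2 ^ (j * (m + 1))).testBit (q * (m + 1) + r) by
          rw [← hYsum]]
      rw [bnbt_sum_testBit (m + 1) m g (fun j hj => hgB j) q r hqm hrB]
      rw [hIform, bnbt_sum_testBit (m + 1) m _ (fun j hj => by
        calc (2:ℕ) ^ m < 2 ^ m + 2 ^ m := by omega
          _ = 2 ^ (m + 1) := by rw [pow_succ]; ring) q r hqm hrB]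
      rw [bnbt_sum_testBit (m + 1) m _ hcoef2 q r hqm hrB]
      rw [Nat.testBit_two_pow]
      by_cases hrm : r = m
      · subst hrm
        rw [Nat.testBit_lt_two_pow (hg q hqm)]
        have h1 : (g q + 2 ^ r).testBit r = true :=
          (bnbt_top_iff r _ (hcoef2 q hqm)).mpr (by omega)
        simp [h1]
      · have hrlt : r < m := by omega
        rw [decide_eq_false (fun h => hrm h.symm), Bool.or_false]
        have : g q + 2 ^ m = 2 ^ m * 1 + g q := by ring
        rw [this, Nat.testBit_two_pow_mul_add 1 (hg q hqm), if_pos hrlt]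
    · push_neg at hp
      have hple : (2:ℕ) ^ (m * (m + 1)) ≤ 2 ^ p := Nat.pow_le_pow_right (by norm_num) hp
      rw [Nat.testBit_lt_two_pow (lt_of_lt_of_le hY hple),
        Nat.testBit_lt_two_pow (lt_of_lt_of_le hIlt hple),
        Nat.testBit_lt_two_pow (lt_of_lt_of_le hS2lt hple)]
      rfl
  -- subtraction
  have hsub : (∑ j ∈ range m, (g j + 2 ^ m) * 2 ^ (j * (m + 1))) - J
      = ∑ j ∈ range m, (g j + (2 ^ m - 1)) * 2 ^ (j * (m + 1)) := by
    apply Nat.sub_eq_of_eq_add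
    rw [hJdef, ← Finset.sum_add_distrib]
    refine Finset.sum_congr rfl (fun j _ => ?_)
    have : g j + 2 ^ m = (g j + (2 ^ m - 1)) + 1 := by omega
    rw [this]; ring
  have hcoefS : ∀ j < m, g j + (2 ^ m - 1) < 2 ^ (m + 1) := by
    intro j hj
    have := hg j hj
    calc g j + (2 ^ m - 1) < 2 ^ m + 2 ^ m := by omega
      _ = 2 ^ (m + 1) := by rw [pow_succ]; ring
  set S : ℕ := ∑ j ∈ range m, (g j + (2 ^ m - 1)) * 2 ^ (j * (m + 1)) with hSdef
  have hSlt : S < 2 ^ (m * (m + 1)) := bnbt_sum_lt (m + 1) m _ hcoefS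
  have hmain : ((Y ||| I) - I >>> m) &&& I = S &&& I := by
    rw [hshift, hYI, hsub]
  constructor
  · intro j hj
    rw [hmain, Nat.testBit_and]
    have hIbit : I.testBit (j * (m + 1) + m) = true := by
      rw [hIform, bnbt_sum_testBit (m + 1) m _ (fun i hi => by
        calc (2:ℕ) ^ m < 2 ^ m + 2 ^ m := by omega
          _ = 2 ^ (m + 1) := by rw [pow_succ]; ring) j m hj (Nat.lt_succ_self m)]
      rw [Nat.testBit_two_pow]
      exact decide_eq_true rfl
    rw [hIbit, Bool.and_true]
    rw [hSdef, bnbt_sum_testBit (m + 1) m _ hcoefS j m hj (Nat.lt_succ_self m)]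
    rw [bnbt_top_iff m _ (hcoefS j hj)]
    rw [← hgne j hj]
    omega
  · intro p hp
    rw [hmain, Nat.testBit_and]
    have hIbit : I.testBit p = false := by
      by_cases hplt : p < m * (m + 1)
      · obtain ⟨q, r, hrB, hpqr⟩ : ∃ q r, r < m + 1 ∧ p = q * (m + 1) + r :=
          ⟨p / (m + 1), p % (m + 1), Nat.mod_lt _ hB, by
            rw [mul_comm]; exact (Nat.div_add_mod p (m + 1)).symm⟩
        have hqm : q < m := by
          by_contra hcon
          push_neg at hcon
          have := Nat.mul_le_mul_right (m + 1) hcon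
          omega
        rw [hpqr, hIform, bnbt_sum_testBit (m + 1) m _ (fun i hi => by
          calc (2:ℕ) ^ m < 2 ^ m + 2 ^ m := by omega
            _ = 2 ^ (m + 1) := by rw [pow_succ]; ring) q r hqm hrB]
        rw [Nat.testBit_two_pow]
        have hrm : r ≠ m := by
          intro h
          exact hp q hqm (by rw [hpqr, h])
        exact decide_eq_false (fun h => hrm h.symm)
      · push_neg at hplt
        exact Nat.testBit_lt_two_pow (lt_of_lt_of_le hIlt
          (Nat.pow_le_pow_right (by norm_num) hplt))
    rw [hIbit, Bool.and_false]
end
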